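/- arXiv:2401.06687 — 6 statements merged into one kernel-verified Lean document; each statement's English description precedes it below -/
import Mathlib

section
/- Let U, W, Z be Bernoulli random variables with W and Z conditionally independent given U. If E[W | U=1] ≥ E[W | U=0] and E[Z | U=1] ≥ E[Z | U=0], then Cov(W, Z) ≥ 0. -/
open scoped Classical
open Finset

/-- Probability of an event on a finite probability space with weights `p`. -/
noncomputable def Pr {Ω : Type*} [Fintype Ω] (p : Ω → ℝ) (E : Ω → Prop) : ℝ :=
  ∑ ω, if E ω then p ω else 0

/-- Conditional probability `P(E | F)`. -/
noncomputable def cPr {Ω : Type*} [Fintype Ω] (p : Ω → ℝ) (E F : Ω → Prop) : ℝ :=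
  Pr p (fun ω => E ω ∧ F ω) / Pr p F

/-- Expectation of a real random variable. -/
noncomputable def Ex {Ω : Type*} [Fintype Ω] (p : Ω → ℝ) (X : Ω → ℝ) : ℝ :=
  ∑ ω, p ω * X ω

/-- Real indicator of a Bernoulli (Bool-valued) random variable. -/
def ind {Ω : Type*} (X : Ω → Bool) : Ω → ℝ := fun ω => if X ω then 1 else 0

/-- If Bernoulli `W` and `Z` are conditionally independent given Bernoulli `U`, and both
`E[W | U=1] ≥ E[W | U=0]` and `E[Z | U=1] ≥ E[Z | U=0]`, then `Cov(W, Z) ≥ 0`. -/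
theorem stmt2 {Ω : Type*} [Fintype Ω] (p : Ω → ℝ)
    (hp : ∀ ω, 0 ≤ p ω) (hsum : ∑ ω, p ω = 1)
    (U W Z : Ω → Bool)
    (hU : ∀ u : Bool, 0 < Pr p (fun ω => U ω = u))
    (hci : ∀ w z u : Bool,
      cPr p (fun ω => W ω = w ∧ Z ω = z) (fun ω => U ω = u)
        = cPr p (fun ω => W ω = w) (fun ω => U ω = u)
          * cPr p (fun ω => Z ω = z) (fun ω => U ω = u))
    (hW : cPr p (fun ω => W ω = true) (fun ω => U ω = false)
          ≤ cPr p (fun ω => W ω = true) (fun ω => U ω = true))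
    (hZ : cPr p (fun ω => Z ω = true) (fun ω => U ω = false)
          ≤ cPr p (fun ω => Z ω = true) (fun ω => U ω = true)) :
    0 ≤ Ex p (fun ω => ind W ω * ind Z ω) - Ex p (ind W) * Ex p (ind Z) := by

  -- abbreviations
  set s1 := Pr p (fun ω => U ω = true) with hs1
  set s0 := Pr p (fun ω => U ω = false) with hs0
  have hsplit : ∀ E : Ω → Prop, Pr p E =
      Pr p (fun ω => E ω ∧ U ω = true) + Pr p (fun ω => E ω ∧ U ω = false) := by
    intro E
    unfold Pr
    rw [← Finset.sum_add_distrib]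
    apply Finset.sum_congr rfl
    intro ω _
    cases hu : U ω <;> by_cases hE : E ω <;> simp [hu, hE]
  have hs01 : s0 + s1 = 1 := by
    have h := hsplit (fun _ => True)
    simp only [true_and] at h
    have h2 : Pr p (fun _ => True) = 1 := by
      unfold Pr; simpa using hsum
    rw [h2] at h
    linarith
  have hcond : ∀ (E : Ω → Prop) (u : Bool),
      Pr p (fun ω => E ω ∧ U ω = u) = cPr p E (fun ω => U ω = u) * Pr p (fun ω => U ω = u) := by
    intro E u
    unfold cPr
    field_simp [ne_of_gt (hU u)]
  set a1 := cPr p (fun ω => W ω = true) (fun ω => U ω = true)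
  set a0 := cPr p (fun ω => W ω = true) (fun ω => U ω = false)
  set b1 := cPr p (fun ω => Z ω = true) (fun ω => U ω = true)
  set b0 := cPr p (fun ω => Z ω = true) (fun ω => U ω = false)
  have hEW : Ex p (ind W) = a1 * s1 + a0 * s0 := by
    have h1 : Ex p (ind W) = Pr p (fun ω => W ω = true) := by
      unfold Ex Pr ind
      apply Finset.sum_congr rfl
      intro ω _
      cases h : W ω <;> simp [h]
    rw [h1, hsplit (fun ω => W ω = true), hcond _ true, hcond _ false]
  have hEZ : Ex p (ind Z) = b1 * s1 + b0 * s0 := by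
    have h1 : Ex p (ind Z) = Pr p (fun ω => Z ω = true) := by
      unfold Ex Pr ind
      apply Finset.sum_congr rfl
      intro ω _
      cases h : Z ω <;> simp [h]
    rw [h1, hsplit (fun ω => Z ω = true), hcond _ true, hcond _ false]
  have hEWZ : Ex p (fun ω => ind W ω * ind Z ω) = a1 * b1 * s1 + a0 * b0 * s0 := by
    have h1 : Ex p (fun ω => ind W ω * ind Z ω) = Pr p (fun ω => W ω = true ∧ Z ω = true) := by
      unfold Ex Pr ind
      apply Finset.sum_congr rfl
      intro ω _
      cases h : W ω <;> cases h' : Z ω <;> simp [h, h']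
    rw [h1, hsplit (fun ω => W ω = true ∧ Z ω = true), hcond _ true, hcond _ false,
      hci true true true, hci true true false]
  rw [hEW, hEZ, hEWZ]
  have h0 := hU false
  have h1 := hU true
  rw [← hs0] at h0
  rw [← hs1] at h1
  have key : a1 * b1 * s1 + a0 * b0 * s0 - (a1 * s1 + a0 * s0) * (b1 * s1 + b0 * s0)
      = s0 * s1 * ((a1 - a0) * (b1 - b0)) := by
    have : s0 = 1 - s1 := by linarith
    rw [this]; ring
  rw [key]
  exact mul_nonneg (mul_nonneg h0.le h1.le)
    (mul_nonneg (sub_nonneg.2 hW) (sub_nonneg.2 hZ))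
end

section
/- Let U, W, Z be Bernoulli random variables such that W ⊥ Z | U, P(W=1 | U=1) > P(W=1 | U=0), and P(Z=1 | U=1) > P(Z=1 | U=0), with all conditional probabilities in (0,1) and 0 < P(U=1) < 1. Then the marginal odds ratio P(W=1,Z=1)·P(W=0,Z=0) / (P(W=1,Z=0)·P(W=0,Z=1)) is strictly greater than 1. -/
open scoped Classical
open Finset

lemma Pr_split {Ω : Type*} [Fintype Ω] (p : Ω → ℝ) (E : Ω → Prop) (U : Ω → Bool) :
    Pr p E = Pr p (fun ω => E ω ∧ U ω = true) + Pr p (fun ω => E ω ∧ U ω = false) := by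
  unfold Pr
  rw [← Finset.sum_add_distrib]
  apply Finset.sum_congr rfl
  intro ω _
  by_cases hE : E ω <;> cases hU : U ω <;> simp [hE, hU]

lemma Pr_mul {Ω : Type*} [Fintype Ω] (p : Ω → ℝ) (E F : Ω → Prop) (h : Pr p F ≠ 0) :
    Pr p (fun ω => E ω ∧ F ω) = cPr p E F * Pr p F := by
  unfold cPr
  field_simp

/-- If Bernoulli `W, Z` are conditionally independent given Bernoulli `U`, both proxies are
strictly informative about `U` (`P(W=1|U=1) > P(W=1|U=0)`, `P(Z=1|U=1) > P(Z=1|U=0)`), all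
conditional probabilities lie in `(0,1)`, and `0 < P(U=1) < 1`, then the marginal odds ratio
of `(W, Z)` is strictly greater than `1`. -/
theorem stmt3 {Ω : Type*} [Fintype Ω] (p : Ω → ℝ)
    (hp : ∀ ω, 0 ≤ p ω) (hsum : ∑ ω, p ω = 1)
    (U W Z : Ω → Bool)
    (hU0 : 0 < Pr p (fun ω => U ω = true)) (hU1 : Pr p (fun ω => U ω = true) < 1)
    (hWnd : ∀ u : Bool, 0 < cPr p (fun ω => W ω = true) (fun ω => U ω = u) ∧
      cPr p (fun ω => W ω = true) (fun ω => U ω = u) < 1)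
    (hZnd : ∀ u : Bool, 0 < cPr p (fun ω => Z ω = true) (fun ω => U ω = u) ∧
      cPr p (fun ω => Z ω = true) (fun ω => U ω = u) < 1)
    (hci : ∀ w z u : Bool,
      cPr p (fun ω => W ω = w ∧ Z ω = z) (fun ω => U ω = u)
        = cPr p (fun ω => W ω = w) (fun ω => U ω = u)
          * cPr p (fun ω => Z ω = z) (fun ω => U ω = u))
    (hWinf : cPr p (fun ω => W ω = true) (fun ω => U ω = false)
          < cPr p (fun ω => W ω = true) (fun ω => U ω = true))
    (hZinf : cPr p (fun ω => Z ω = true) (fun ω => U ω = false)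
          < cPr p (fun ω => Z ω = true) (fun ω => U ω = true)) :
    1 < (Pr p (fun ω => W ω = true ∧ Z ω = true) * Pr p (fun ω => W ω = false ∧ Z ω = false)) /
        (Pr p (fun ω => W ω = true ∧ Z ω = false) *
          Pr p (fun ω => W ω = false ∧ Z ω = true)) := by
  set π := Pr p (fun ω => U ω = true) with hπdef
  -- total mass is 1
  have htot : Pr p (fun _ : Ω => True) = 1 := by
    unfold Pr; simpa using hsum
  have hsplit1 := Pr_split p (fun _ : Ω => True) U
  have hUt : Pr p (fun ω => (U ω = true)) = π := rfl
  have hPtrue : Pr p (fun ω => True ∧ U ω = true) = π := by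
    unfold Pr; apply Finset.sum_congr rfl; intro ω _; simp
  have hPfalse : Pr p (fun ω => True ∧ U ω = false) = Pr p (fun ω => U ω = false) := by
    unfold Pr; apply Finset.sum_congr rfl; intro ω _; simp
  have hUf : Pr p (fun ω => U ω = false) = 1 - π := by
    rw [htot, hPtrue, hPfalse] at hsplit1; linarith
  have hq : (0:ℝ) < 1 - π := by linarith
  have hUtne : Pr p (fun ω => U ω = true) ≠ 0 := ne_of_gt hU0
  have hUfne : Pr p (fun ω => U ω = false) ≠ 0 := by rw [hUf]; exact ne_of_gt hq
  have hUne : ∀ u : Bool, Pr p (fun ω => U ω = u) ≠ 0 := by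
    intro u
    cases u
    · exact hUfne
    · exact hUtne
  -- complements of conditional probabilities
  have hWc : ∀ u : Bool, cPr p (fun ω => W ω = false) (fun ω => U ω = u)
      = 1 - cPr p (fun ω => W ω = true) (fun ω => U ω = u) := by
    intro u
    have hs := Pr_split p (fun ω => U ω = u) W
    have e1 : Pr p (fun ω => U ω = u ∧ W ω = true) = Pr p (fun ω => W ω = true ∧ U ω = u) := by
      unfold Pr; apply Finset.sum_congr rfl; intro ω _; simp [and_comm]
    have e2 : Pr p (fun ω => U ω = u ∧ W ω = false) = Pr p (fun ω => W ω = false ∧ U ω = u) := by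
      unfold Pr; apply Finset.sum_congr rfl; intro ω _; simp [and_comm]
    rw [e1, e2] at hs
    unfold cPr
    rw [div_eq_iff (hUne u), sub_mul, one_mul, div_mul_cancel₀ _ (hUne u)]
    linarith [hs]
  have hZc : ∀ u : Bool, cPr p (fun ω => Z ω = false) (fun ω => U ω = u)
      = 1 - cPr p (fun ω => Z ω = true) (fun ω => U ω = u) := by
    intro u
    have hs := Pr_split p (fun ω => U ω = u) Z
    have e1 : Pr p (fun ω => U ω = u ∧ Z ω = true) = Pr p (fun ω => Z ω = true ∧ U ω = u) := by
      unfold Pr; apply Finset.sum_congr rfl; intro ω _; simp [and_comm]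
    have e2 : Pr p (fun ω => U ω = u ∧ Z ω = false) = Pr p (fun ω => Z ω = false ∧ U ω = u) := by
      unfold Pr; apply Finset.sum_congr rfl; intro ω _; simp [and_comm]
    rw [e1, e2] at hs
    unfold cPr
    rw [div_eq_iff (hUne u), sub_mul, one_mul, div_mul_cancel₀ _ (hUne u)]
    linarith [hs]
  set a1 := cPr p (fun ω => W ω = true) (fun ω => U ω = true) with ha1
  set a0 := cPr p (fun ω => W ω = true) (fun ω => U ω = false) with ha0
  set b1 := cPr p (fun ω => Z ω = true) (fun ω => U ω = true) with hb1
  set b0 := cPr p (fun ω => Z ω = true) (fun ω => U ω = false) with hb0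
  have cw : ∀ w u : Bool, cPr p (fun ω => W ω = w) (fun ω => U ω = u)
      = if w then (if u then a1 else a0) else (1 - if u then a1 else a0) := by
    intro w u
    cases w <;> cases u <;> simp [hWc true, hWc false, ha1, ha0]
  have cz : ∀ z u : Bool, cPr p (fun ω => Z ω = z) (fun ω => U ω = u)
      = if z then (if u then b1 else b0) else (1 - if u then b1 else b0) := by
    intro z u
    cases z <;> cases u <;> simp [hZc true, hZc false, hb1, hb0]
  -- joint formulas
  have joint : ∀ w z : Bool, Pr p (fun ω => W ω = w ∧ Z ω = z)
      = (if w then a1 else 1 - a1) * (if z then b1 else 1 - b1) * π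
        + (if w then a0 else 1 - a0) * (if z then b0 else 1 - b0) * (1 - π) := by
    intro w z
    have hs := Pr_split p (fun ω => W ω = w ∧ Z ω = z) U
    rw [Pr_mul p _ _ hUtne, Pr_mul p _ _ hUfne, hci w z true, hci w z false,
      cw w true, cw w false, cz z true, cz z false, hUf] at hs
    rw [hs]
    cases w <;> cases z <;> simp [hUt]
  have hA1 : 0 < a1 := (hWnd true).1
  have hA1' : a1 < 1 := (hWnd true).2
  have hA0 : 0 < a0 := (hWnd false).1
  have hA0' : a0 < 1 := (hWnd false).2
  have hB1 : 0 < b1 := (hZnd true).1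
  have hB1' : b1 < 1 := (hZnd true).2
  have hB0 : 0 < b0 := (hZnd false).1
  have hB0' : b0 < 1 := (hZnd false).2
  have h11 := joint true true
  have h10 := joint true false
  have h01 := joint false true
  have h00 := joint false false
  norm_num at h11 h10 h01 h00
  have P10pos : 0 < Pr p (fun ω => W ω = true ∧ Z ω = false) := by
    rw [h10]
    nlinarith [mul_pos (mul_pos hA1 (by linarith : (0:ℝ) < 1 - b1)) hU0,
      mul_pos (mul_pos hA0 (by linarith : (0:ℝ) < 1 - b0)) hq]
  have P01pos : 0 < Pr p (fun ω => W ω = false ∧ Z ω = true) := by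
    rw [h01]
    nlinarith [mul_pos (mul_pos (by linarith : (0:ℝ) < 1 - a1) hB1) hU0,
      mul_pos (mul_pos (by linarith : (0:ℝ) < 1 - a0) hB0) hq]
  rw [one_lt_div (by positivity)]
  rw [h11, h10, h01, h00]
  nlinarith [mul_pos (mul_pos (mul_pos hU0 hq) (sub_pos.2 hWinf)) (sub_pos.2 hZinf)]
end

section
/- Consider a discrete structural causal model over binary variables U, A, W, Z and a real-valued Y, where: the joint law factorizes as p(u) p(z|u) p(w|u) p(a|u) p(y|a,u) (so W ⊥ (A,Z) | U, Z ⊥ (Y,W) | (A,U), in particular W ⊥ Z | U), all conditional probabilities are strictly positive, and the 2×2 matrices [P(Z=z | U=u)] and [P(W=w | U=u)] are invertible. If h : {0,1} × {0,1} → ℝ satisfies E[Y | A=a, Z=z] = Σ_w h(a,w) P(W=w | A=a, Z=z) for all a, z, then Σ_w h(a,w) P(W=w) = Σ_u E[Y | A=a, U=u] P(U=u) for each a ∈ {0,1}. -/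
open scoped Classical
open Finset

/-- Conditional expectation `E[X | F]`. -/
noncomputable def cEx {Ω : Type*} [Fintype Ω] (p : Ω → ℝ) (X : Ω → ℝ) (F : Ω → Prop) : ℝ :=
  (∑ ω, if F ω then p ω * X ω else 0) / Pr p F

/-- Unnormalized conditional mean mass. -/
noncomputable def PNum {Ω : Type*} [Fintype Ω] (p : Ω → ℝ) (X : Ω → ℝ) (F : Ω → Prop) : ℝ :=
  ∑ ω, if F ω then p ω * X ω else 0

section helpers
variable {Ω : Type*} [Fintype Ω]

lemma cEx_eq_PNum_div (p : Ω → ℝ) (X : Ω → ℝ) (F : Ω → Prop) :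
    cEx p X F = PNum p X F / Pr p F := rfl

lemma Pr_congr (p : Ω → ℝ) {E F : Ω → Prop} (h : ∀ ω, E ω ↔ F ω) :
    Pr p E = Pr p F := by
  unfold Pr
  exact Finset.sum_congr rfl fun ω _ => by simp only [h ω]

lemma PNum_congr (p : Ω → ℝ) (X : Ω → ℝ) {E F : Ω → Prop} (h : ∀ ω, E ω ↔ F ω) :
    PNum p X E = PNum p X F := by
  unfold PNum
  exact Finset.sum_congr rfl fun ω _ => by simp only [h ω]

lemma Pr_nonneg (p : Ω → ℝ) (hp : ∀ ω, 0 ≤ p ω) (E : Ω → Prop) : 0 ≤ Pr p E :=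
  Finset.sum_nonneg fun ω _ => by by_cases hE : E ω <;> simp [hE, hp ω]

lemma Pr_split_bool (p : Ω → ℝ) (E : Ω → Prop) (X : Ω → Bool) :
    Pr p E = ∑ b : Bool, Pr p (fun ω => E ω ∧ X ω = b) := by
  unfold Pr
  rw [Finset.sum_comm]
  refine Finset.sum_congr rfl fun ω _ => ?_
  by_cases hE : E ω
  · simp [hE]
  · simp [hE]

lemma PNum_split_bool (p : Ω → ℝ) (X : Ω → ℝ) (E : Ω → Prop) (B : Ω → Bool) :
    PNum p X E = ∑ b : Bool, PNum p X (fun ω => E ω ∧ B ω = b) := by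
  unfold PNum
  rw [Finset.sum_comm]
  refine Finset.sum_congr rfl fun ω _ => ?_
  by_cases hE : E ω
  · simp [hE]
  · simp [hE]

lemma Pr_split_val (p : Ω → ℝ) (E : Ω → Prop) (Y : Ω → ℝ) :
    Pr p E = ∑ y ∈ Finset.image Y Finset.univ, Pr p (fun ω => E ω ∧ Y ω = y) := by
  unfold Pr
  rw [Finset.sum_comm]
  refine Finset.sum_congr rfl fun ω _ => ?_
  by_cases hE : E ω
  · have hmem : Y ω ∈ Finset.image Y Finset.univ := Finset.mem_image_of_mem Y (Finset.mem_univ ω)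
    simp [hE, hmem]
  · simp [hE]

lemma PNum_split_val (p : Ω → ℝ) (X : Ω → ℝ) (E : Ω → Prop) (Y : Ω → ℝ) :
    PNum p X E = ∑ y ∈ Finset.image Y Finset.univ, PNum p X (fun ω => E ω ∧ Y ω = y) := by
  unfold PNum
  rw [Finset.sum_comm]
  refine Finset.sum_congr rfl fun ω _ => ?_
  by_cases hE : E ω
  · have hmem : Y ω ∈ Finset.image Y Finset.univ := Finset.mem_image_of_mem Y (Finset.mem_univ ω)
    simp [hE, hmem]
  · simp [hE]

lemma PNum_on_level (p : Ω → ℝ) (Y : Ω → ℝ) (E : Ω → Prop) (y : ℝ) :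
    PNum p Y (fun ω => E ω ∧ Y ω = y) = y * Pr p (fun ω => E ω ∧ Y ω = y) := by
  unfold PNum Pr
  rw [Finset.mul_sum]
  refine Finset.sum_congr rfl fun ω _ => ?_
  by_cases hc : E ω ∧ Y ω = y
  · rw [if_pos hc, if_pos hc, hc.2]; ring
  · rw [if_neg hc, if_neg hc]; ring

lemma sum_cPr_bool (p : Ω → ℝ) (F : Ω → Prop) (X : Ω → Bool) (hF : Pr p F ≠ 0) :
    ∑ b : Bool, cPr p (fun ω => X ω = b) F = 1 := by
  unfold cPr
  rw [← Finset.sum_div, div_eq_one_iff_eq hF]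
  rw [show Pr p F = ∑ b : Bool, Pr p (fun ω => F ω ∧ X ω = b) from Pr_split_bool p F X]
  exact Finset.sum_congr rfl fun b _ => Pr_congr p (fun ω => and_comm)

lemma sum_cPr_val (p : Ω → ℝ) (F : Ω → Prop) (Y : Ω → ℝ) (hF : Pr p F ≠ 0) :
    ∑ y ∈ Finset.image Y Finset.univ, cPr p (fun ω => Y ω = y) F = 1 := by
  unfold cPr
  rw [← Finset.sum_div, div_eq_one_iff_eq hF]
  rw [show Pr p F = ∑ y ∈ Finset.image Y Finset.univ, Pr p (fun ω => F ω ∧ Y ω = y) from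
    Pr_split_val p F Y]
  exact Finset.sum_congr rfl fun y _ => Pr_congr p (fun ω => and_comm)

lemma PNum_eq_sum_levels (p : Ω → ℝ) (F : Ω → Prop) (Y : Ω → ℝ) :
    PNum p Y F = ∑ y ∈ Finset.image Y Finset.univ,
      y * Pr p (fun ω => (Y ω = y) ∧ F ω) := by
  rw [PNum_split_val p Y F Y]
  refine Finset.sum_congr rfl fun y _ => ?_
  rw [PNum_on_level p Y F y]
  exact congrArg _ (Pr_congr p fun ω => and_comm)

end helpers


lemma sum_mul_cPr_val {Ω : Type*} [Fintype Ω] (p : Ω → ℝ) (F : Ω → Prop) (Y : Ω → ℝ) :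
    ∑ y ∈ Finset.image Y Finset.univ, y * cPr p (fun ω => Y ω = y) F = cEx p Y F := by
  rw [cEx_eq_PNum_div, PNum_eq_sum_levels, Finset.sum_div]
  refine Finset.sum_congr rfl fun y _ => ?_
  rw [mul_div_assoc]
  rfl

/-- Proximal g-formula identification with binary `U, A, W, Z` and real `Y`:
in a model whose joint law factorizes as `p(u) p(z|u) p(w|u) p(a|u) p(y|a,u)` with strictly
positive conditionals and invertible matrices `[P(Z=z|U=u)]` and `[P(W=w|U=u)]`, any solution
`h` of the bridge equation `E[Y | A=a, Z=z] = Σ_w h(a,w) P(W=w | A=a, Z=z)` satisfies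
`Σ_w h(a,w) P(W=w) = Σ_u E[Y | A=a, U=u] P(U=u)` for each `a`. -/
theorem stmt7 {Ω : Type*} [Fintype Ω] (p : Ω → ℝ)
    (hp : ∀ ω, 0 ≤ p ω) (hsum : ∑ ω, p ω = 1)
    (U A W Z : Ω → Bool) (Y : Ω → ℝ)
    (hfact : ∀ (u z w a : Bool) (y : ℝ),
      Pr p (fun ω => U ω = u ∧ Z ω = z ∧ W ω = w ∧ A ω = a ∧ Y ω = y)
        = Pr p (fun ω => U ω = u)
          * cPr p (fun ω => Z ω = z) (fun ω => U ω = u)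
          * cPr p (fun ω => W ω = w) (fun ω => U ω = u)
          * cPr p (fun ω => A ω = a) (fun ω => U ω = u)
          * cPr p (fun ω => Y ω = y) (fun ω => A ω = a ∧ U ω = u))
    (hUpos : ∀ u : Bool, 0 < Pr p (fun ω => U ω = u))
    (hZpos : ∀ z u : Bool, 0 < cPr p (fun ω => Z ω = z) (fun ω => U ω = u))
    (hWpos : ∀ w u : Bool, 0 < cPr p (fun ω => W ω = w) (fun ω => U ω = u))
    (hApos : ∀ a u : Bool, 0 < cPr p (fun ω => A ω = a) (fun ω => U ω = u))
    (hZinv : IsUnit (Matrix.of fun (z u : Bool) =>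
      cPr p (fun ω => Z ω = z) (fun ω => U ω = u)))
    (hWinv : IsUnit (Matrix.of fun (w u : Bool) =>
      cPr p (fun ω => W ω = w) (fun ω => U ω = u)))
    (h : Bool → Bool → ℝ)
    (hbridge : ∀ a z : Bool,
      cEx p Y (fun ω => A ω = a ∧ Z ω = z)
        = ∑ w : Bool, h a w * cPr p (fun ω => W ω = w) (fun ω => A ω = a ∧ Z ω = z)) :
    ∀ a : Bool,
      ∑ w : Bool, h a w * Pr p (fun ω => W ω = w)
        = ∑ u : Bool, cEx p Y (fun ω => A ω = a ∧ U ω = u) * Pr p (fun ω => U ω = u) := by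
  have hUne : ∀ u, Pr p (fun ω => U ω = u) ≠ 0 := fun u => (hUpos u).ne'
  have hAUpos : ∀ a u, 0 < Pr p (fun ω => A ω = a ∧ U ω = u) := by
    intro a u
    have h1 : 0 < Pr p (fun ω => A ω = a ∧ U ω = u) / Pr p (fun ω => U ω = u) := hApos a u
    have h2 := mul_pos h1 (hUpos u)
    rwa [div_mul_cancel₀ _ (hUne u)] at h2
  have hAUne : ∀ a u, Pr p (fun ω => A ω = a ∧ U ω = u) ≠ 0 := fun a u => (hAUpos a u).ne'
  -- joint law for the four binary variables
  have joint : ∀ u z w a,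
      Pr p (fun ω => U ω = u ∧ Z ω = z ∧ W ω = w ∧ A ω = a)
        = Pr p (fun ω => U ω = u) * cPr p (fun ω => Z ω = z) (fun ω => U ω = u)
          * cPr p (fun ω => W ω = w) (fun ω => U ω = u)
          * cPr p (fun ω => A ω = a) (fun ω => U ω = u) := by
    intro u z w a
    rw [Pr_split_val p _ Y]
    have hc : ∀ y : ℝ, Pr p (fun ω => (U ω = u ∧ Z ω = z ∧ W ω = w ∧ A ω = a) ∧ Y ω = y)
        = Pr p (fun ω => U ω = u ∧ Z ω = z ∧ W ω = w ∧ A ω = a ∧ Y ω = y) :=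
      fun y => Pr_congr p fun ω => by tauto
    rw [Finset.sum_congr rfl fun y _ => (hc y).trans (hfact u z w a y)]
    rw [← Finset.mul_sum, sum_cPr_val p _ Y (hAUne a u), mul_one]
  -- joint Y-weighted law
  have jointY : ∀ u z w a,
      PNum p Y (fun ω => U ω = u ∧ Z ω = z ∧ W ω = w ∧ A ω = a)
        = Pr p (fun ω => U ω = u) * cPr p (fun ω => Z ω = z) (fun ω => U ω = u)
          * cPr p (fun ω => W ω = w) (fun ω => U ω = u)
          * cPr p (fun ω => A ω = a) (fun ω => U ω = u)
          * cEx p Y (fun ω => A ω = a ∧ U ω = u) := by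
    intro u z w a
    rw [PNum_eq_sum_levels p _ Y]
    have hc : ∀ y : ℝ, Pr p (fun ω => Y ω = y ∧ (U ω = u ∧ Z ω = z ∧ W ω = w ∧ A ω = a))
        = Pr p (fun ω => U ω = u ∧ Z ω = z ∧ W ω = w ∧ A ω = a ∧ Y ω = y) :=
      fun y => Pr_congr p fun ω => by tauto
    rw [Finset.sum_congr rfl fun y _ => show
        y * Pr p (fun ω => Y ω = y ∧ (U ω = u ∧ Z ω = z ∧ W ω = w ∧ A ω = a))
        = (Pr p (fun ω => U ω = u) * cPr p (fun ω => Z ω = z) (fun ω => U ω = u)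
          * cPr p (fun ω => W ω = w) (fun ω => U ω = u)
          * cPr p (fun ω => A ω = a) (fun ω => U ω = u))
          * (y * cPr p (fun ω => Y ω = y) (fun ω => A ω = a ∧ U ω = u)) by
      rw [hc y, hfact u z w a y]; ring]
    rw [← Finset.mul_sum, sum_mul_cPr_val p _ Y]
  -- marginal of W
  have PW : ∀ w, Pr p (fun ω => W ω = w)
      = ∑ u : Bool, cPr p (fun ω => W ω = w) (fun ω => U ω = u) * Pr p (fun ω => U ω = u) := by
    intro w
    rw [Pr_split_bool p _ U]
    refine Finset.sum_congr rfl fun u _ => ?_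
    rw [Pr_split_bool p _ Z]
    rw [Finset.sum_congr rfl fun z _ => Pr_split_bool p _ A]
    rw [Finset.sum_congr rfl fun z _ => Finset.sum_congr rfl fun a' _ =>
      (Pr_congr p (fun ω => by tauto)).trans (joint u z w a')]
    have h1 := sum_cPr_bool p (fun ω => U ω = u) Z (hUne u)
    have h2 := sum_cPr_bool p (fun ω => U ω = u) A (hUne u)
    simp only [Fintype.sum_bool] at h1 h2 ⊢
    have hb1 : cPr p (fun ω => Z ω = false) (fun ω => U ω = u)
        = 1 - cPr p (fun ω => Z ω = true) (fun ω => U ω = u) := by linarith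
    have hb2 : cPr p (fun ω => A ω = false) (fun ω => U ω = u)
        = 1 - cPr p (fun ω => A ω = true) (fun ω => U ω = u) := by linarith
    rw [hb1, hb2]; ring
  -- marginal of (A, Z)
  have PAZ : ∀ a z, Pr p (fun ω => A ω = a ∧ Z ω = z)
      = ∑ u : Bool, Pr p (fun ω => U ω = u) * cPr p (fun ω => Z ω = z) (fun ω => U ω = u)
          * cPr p (fun ω => A ω = a) (fun ω => U ω = u) := by
    intro a z
    rw [Pr_split_bool p _ U]
    refine Finset.sum_congr rfl fun u _ => ?_
    rw [Pr_split_bool p _ W]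
    rw [Finset.sum_congr rfl fun w _ =>
      (Pr_congr p (fun ω => by tauto)).trans (joint u z w a)]
    have h1 := sum_cPr_bool p (fun ω => U ω = u) W (hUne u)
    simp only [Fintype.sum_bool] at h1 ⊢
    have hb1 : cPr p (fun ω => W ω = false) (fun ω => U ω = u)
        = 1 - cPr p (fun ω => W ω = true) (fun ω => U ω = u) := by linarith
    rw [hb1]; ring
  -- joint of W and (A, Z)
  have PWAZ : ∀ w a z, Pr p (fun ω => W ω = w ∧ (A ω = a ∧ Z ω = z))
      = ∑ u : Bool, Pr p (fun ω => U ω = u) * cPr p (fun ω => Z ω = z) (fun ω => U ω = u)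
          * cPr p (fun ω => W ω = w) (fun ω => U ω = u)
          * cPr p (fun ω => A ω = a) (fun ω => U ω = u) := by
    intro w a z
    rw [Pr_split_bool p _ U]
    exact Finset.sum_congr rfl fun u _ =>
      (Pr_congr p (fun ω => by tauto)).trans (joint u z w a)
  -- Y-mass of (A, Z)
  have NAZ : ∀ a z, PNum p Y (fun ω => A ω = a ∧ Z ω = z)
      = ∑ u : Bool, Pr p (fun ω => U ω = u) * cPr p (fun ω => Z ω = z) (fun ω => U ω = u)
          * cPr p (fun ω => A ω = a) (fun ω => U ω = u)
          * cEx p Y (fun ω => A ω = a ∧ U ω = u) := by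
    intro a z
    rw [PNum_split_bool p Y _ U]
    refine Finset.sum_congr rfl fun u _ => ?_
    rw [PNum_split_bool p Y _ W]
    rw [Finset.sum_congr rfl fun w _ =>
      (PNum_congr p Y (fun ω => by tauto)).trans (jointY u z w a)]
    have h1 := sum_cPr_bool p (fun ω => U ω = u) W (hUne u)
    simp only [Fintype.sum_bool] at h1 ⊢
    have hb1 : cPr p (fun ω => W ω = false) (fun ω => U ω = u)
        = 1 - cPr p (fun ω => W ω = true) (fun ω => U ω = u) := by linarith
    rw [hb1]; ring
  intro a
  -- the discrepancy vector
  set v : Bool → ℝ := fun u =>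
    (cPr p (fun ω => A ω = a) (fun ω => U ω = u) * Pr p (fun ω => U ω = u))
      * (cEx p Y (fun ω => A ω = a ∧ U ω = u)
        - ∑ w : Bool, h a w * cPr p (fun ω => W ω = w) (fun ω => U ω = u)) with hvdef
  have hveq : ∀ z, (∑ u : Bool, cPr p (fun ω => Z ω = z) (fun ω => U ω = u) * v u) = 0 := by
    intro z
    have hDpos : 0 < Pr p (fun ω => A ω = a ∧ Z ω = z) := by
      rw [PAZ a z]
      refine Finset.sum_pos (fun u _ => ?_) Finset.univ_nonempty
      exact mul_pos (mul_pos (hUpos u) (hZpos z u)) (hApos a u)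
    have hD : Pr p (fun ω => A ω = a ∧ Z ω = z) ≠ 0 := hDpos.ne'
    have hb := hbridge a z
    rw [cEx_eq_PNum_div, NAZ a z] at hb
    have hcw : ∀ w, cPr p (fun ω => W ω = w) (fun ω => A ω = a ∧ Z ω = z)
        = (∑ u : Bool, Pr p (fun ω => U ω = u) * cPr p (fun ω => Z ω = z) (fun ω => U ω = u)
            * cPr p (fun ω => W ω = w) (fun ω => U ω = u)
            * cPr p (fun ω => A ω = a) (fun ω => U ω = u))
          / Pr p (fun ω => A ω = a ∧ Z ω = z) := by
      intro w
      have hh : cPr p (fun ω => W ω = w) (fun ω => A ω = a ∧ Z ω = z)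
          = Pr p (fun ω => W ω = w ∧ (A ω = a ∧ Z ω = z))
            / Pr p (fun ω => A ω = a ∧ Z ω = z) := rfl
      rw [hh, PWAZ w a z]
    simp only [hcw] at hb
    simp only [← mul_div_assoc, ← Finset.sum_div] at hb
    field_simp [hD] at hb
    simp only [hvdef, Fintype.sum_bool] at hb ⊢
    ring_nf at hb ⊢
    linarith
  have hmv : (Matrix.of fun (z u : Bool) =>
      cPr p (fun ω => Z ω = z) (fun ω => U ω = u)).mulVec v = 0 := by
    funext z
    have := hveq z
    simpa [Matrix.mulVec, dotProduct, Matrix.of_apply] using this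
  have hdet := (Matrix.isUnit_iff_isUnit_det _).mp hZinv
  have hv0 : v = 0 := by
    have h2 := congrArg (fun w => Matrix.mulVec
      (Matrix.of fun (z u : Bool) => cPr p (fun ω => Z ω = z) (fun ω => U ω = u))⁻¹ w) hmv
    simpa [Matrix.mulVec_mulVec, Matrix.nonsing_inv_mul _ hdet, Matrix.one_mulVec,
      Matrix.mulVec_zero] using h2
  have he : ∀ u, cEx p Y (fun ω => A ω = a ∧ U ω = u)
      = ∑ w : Bool, h a w * cPr p (fun ω => W ω = w) (fun ω => U ω = u) := by
    intro u
    have h0 : v u = 0 := congrFun hv0 u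
    rw [hvdef] at h0
    have hne : cPr p (fun ω => A ω = a) (fun ω => U ω = u) * Pr p (fun ω => U ω = u) ≠ 0 :=
      (mul_pos (hApos a u) (hUpos u)).ne'
    have := (mul_eq_zero.mp h0).resolve_left hne
    linarith [this]
  simp only [PW, he, Fintype.sum_bool]
  ring
end

section
/- There exists a finite probability space with binary random variables U, W, A and real-valued Y such that: W ⊥ (A, Y) | U, P(W = U) < 1, and the adjustment functional Σ_w (E[Y | A=1, W=w] − E[Y | A=0, W=w]) P(W=w) differs from Σ_u (E[Y | A=1, U=u] − E[Y | A=0, U=u]) P(U=u). -/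
open scoped Classical
open Finset

def Uv8 : Fin 8 → Bool := ![false,false,false,false,true,true,true,true]
def Wv8 : Fin 8 → Bool := ![false,false,true,true,false,false,true,true]
def Av8 : Fin 8 → Bool := ![false,true,false,true,false,true,false,true]
noncomputable def pv8 : Fin 8 → ℝ := fun ω => if Av8 ω = Uv8 ω then 3/16 else 1/16
noncomputable def Yv8 : Fin 8 → ℝ := ![(0:ℝ),0,0,0,1,1,1,1]
@[simp] lemma pv8_0 : pv8 0 = 3/16 := rfl
@[simp] lemma Uv8_0 : Uv8 0 = false := rfl
@[simp] lemma Wv8_0 : Wv8 0 = false := rfl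
@[simp] lemma Av8_0 : Av8 0 = false := rfl
@[simp] lemma Yv8_0 : Yv8 0 = (0:ℝ) := rfl
@[simp] lemma pv8_1 : pv8 1 = 1/16 := rfl
@[simp] lemma Uv8_1 : Uv8 1 = false := rfl
@[simp] lemma Wv8_1 : Wv8 1 = false := rfl
@[simp] lemma Av8_1 : Av8 1 = true := rfl
@[simp] lemma Yv8_1 : Yv8 1 = (0:ℝ) := rfl
@[simp] lemma pv8_2 : pv8 2 = 3/16 := rfl
@[simp] lemma Uv8_2 : Uv8 2 = false := rfl
@[simp] lemma Wv8_2 : Wv8 2 = true := rfl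
@[simp] lemma Av8_2 : Av8 2 = false := rfl
@[simp] lemma Yv8_2 : Yv8 2 = (0:ℝ) := rfl
@[simp] lemma pv8_3 : pv8 3 = 1/16 := rfl
@[simp] lemma Uv8_3 : Uv8 3 = false := rfl
@[simp] lemma Wv8_3 : Wv8 3 = true := rfl
@[simp] lemma Av8_3 : Av8 3 = true := rfl
@[simp] lemma Yv8_3 : Yv8 3 = (0:ℝ) := rfl
@[simp] lemma pv8_4 : pv8 4 = 1/16 := rfl
@[simp] lemma Uv8_4 : Uv8 4 = true := rfl
@[simp] lemma Wv8_4 : Wv8 4 = false := rfl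
@[simp] lemma Av8_4 : Av8 4 = false := rfl
@[simp] lemma Yv8_4 : Yv8 4 = (1:ℝ) := rfl
@[simp] lemma pv8_5 : pv8 5 = 3/16 := rfl
@[simp] lemma Uv8_5 : Uv8 5 = true := rfl
@[simp] lemma Wv8_5 : Wv8 5 = false := rfl
@[simp] lemma Av8_5 : Av8 5 = true := rfl
@[simp] lemma Yv8_5 : Yv8 5 = (1:ℝ) := rfl
@[simp] lemma pv8_6 : pv8 6 = 1/16 := rfl
@[simp] lemma Uv8_6 : Uv8 6 = true := rfl
@[simp] lemma Wv8_6 : Wv8 6 = true := rfl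
@[simp] lemma Av8_6 : Av8 6 = false := rfl
@[simp] lemma Yv8_6 : Yv8 6 = (1:ℝ) := rfl
@[simp] lemma pv8_7 : pv8 7 = 3/16 := rfl
@[simp] lemma Uv8_7 : Uv8 7 = true := rfl
@[simp] lemma Wv8_7 : Wv8 7 = true := rfl
@[simp] lemma Av8_7 : Av8 7 = true := rfl
@[simp] lemma Yv8_7 : Yv8 7 = (1:ℝ) := rfl

/-- Gotcha #1: there is a finite probability space with binary `U, W, A` and real `Y` such that
`W ⊥ (A, Y) | U`, `P(W = U) < 1`, all conditioning events have positive probability, and the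
backdoor adjustment functional computed with the proxy `W` differs from the one with `U`. -/
theorem stmt8 :
    ∃ (n : ℕ) (p : Fin n → ℝ) (U W A : Fin n → Bool) (Y : Fin n → ℝ),
      (∀ ω, 0 ≤ p ω) ∧ (∑ ω, p ω = 1) ∧
      (∀ (w a : Bool) (y : ℝ) (u : Bool),
        cPr p (fun ω => W ω = w ∧ A ω = a ∧ Y ω = y) (fun ω => U ω = u)
          = cPr p (fun ω => W ω = w) (fun ω => U ω = u)
            * cPr p (fun ω => A ω = a ∧ Y ω = y) (fun ω => U ω = u)) ∧
      Pr p (fun ω => W ω = U ω) < 1 ∧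
      (∀ a w : Bool, 0 < Pr p (fun ω => A ω = a ∧ W ω = w)) ∧
      (∀ a u : Bool, 0 < Pr p (fun ω => A ω = a ∧ U ω = u)) ∧
      (∑ w : Bool,
          (cEx p Y (fun ω => A ω = true ∧ W ω = w)
            - cEx p Y (fun ω => A ω = false ∧ W ω = w)) * Pr p (fun ω => W ω = w))
        ≠ (∑ u : Bool,
          (cEx p Y (fun ω => A ω = true ∧ U ω = u)
            - cEx p Y (fun ω => A ω = false ∧ U ω = u)) * Pr p (fun ω => U ω = u)) := by
  refine ⟨8, pv8, Uv8, Wv8, Av8, Yv8, ?_, ?_, ?_, ?_, ?_, ?_, ?_⟩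
  · intro ω; unfold pv8; split <;> norm_num
  · simp only [Fin.sum_univ_eight, pv8_0, Uv8_0, Wv8_0, Av8_0, Yv8_0, pv8_1, Uv8_1, Wv8_1, Av8_1, Yv8_1, pv8_2, Uv8_2, Wv8_2, Av8_2, Yv8_2, pv8_3, Uv8_3, Wv8_3, Av8_3, Yv8_3, pv8_4, Uv8_4, Wv8_4, Av8_4, Yv8_4, pv8_5, Uv8_5, Wv8_5, Av8_5, Yv8_5, pv8_6, Uv8_6, Wv8_6, Av8_6, Yv8_6, pv8_7, Uv8_7, Wv8_7, Av8_7, Yv8_7]; norm_num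
  · intro w a y u
    cases u <;> cases w <;> cases a <;>
      simp only [cPr, Pr, Fin.sum_univ_eight, pv8_0, Uv8_0, Wv8_0, Av8_0, Yv8_0, pv8_1, Uv8_1, Wv8_1, Av8_1, Yv8_1, pv8_2, Uv8_2, Wv8_2, Av8_2, Yv8_2, pv8_3, Uv8_3, Wv8_3, Av8_3, Yv8_3, pv8_4, Uv8_4, Wv8_4, Av8_4, Yv8_4, pv8_5, Uv8_5, Wv8_5, Av8_5, Yv8_5, pv8_6, Uv8_6, Wv8_6, Av8_6, Yv8_6, pv8_7, Uv8_7, Wv8_7, Av8_7, Yv8_7] <;>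
      rcases eq_or_ne y 1 with hy | hy <;> rcases eq_or_ne y 0 with hy0 | hy0 <;>
      simp_all [eq_comm] <;> norm_num
  · simp only [Pr, Fin.sum_univ_eight, pv8_0, Uv8_0, Wv8_0, Av8_0, Yv8_0, pv8_1, Uv8_1, Wv8_1, Av8_1, Yv8_1, pv8_2, Uv8_2, Wv8_2, Av8_2, Yv8_2, pv8_3, Uv8_3, Wv8_3, Av8_3, Yv8_3, pv8_4, Uv8_4, Wv8_4, Av8_4, Yv8_4, pv8_5, Uv8_5, Wv8_5, Av8_5, Yv8_5, pv8_6, Uv8_6, Wv8_6, Av8_6, Yv8_6, pv8_7, Uv8_7, Wv8_7, Av8_7, Yv8_7]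
    norm_num
  · intro a w
    cases a <;> cases w <;> simp only [Pr, Fin.sum_univ_eight, pv8_0, Uv8_0, Wv8_0, Av8_0, Yv8_0, pv8_1, Uv8_1, Wv8_1, Av8_1, Yv8_1, pv8_2, Uv8_2, Wv8_2, Av8_2, Yv8_2, pv8_3, Uv8_3, Wv8_3, Av8_3, Yv8_3, pv8_4, Uv8_4, Wv8_4, Av8_4, Yv8_4, pv8_5, Uv8_5, Wv8_5, Av8_5, Yv8_5, pv8_6, Uv8_6, Wv8_6, Av8_6, Yv8_6, pv8_7, Uv8_7, Wv8_7, Av8_7, Yv8_7] <;> norm_num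
  · intro a u
    cases a <;> cases u <;> simp only [Pr, Fin.sum_univ_eight, pv8_0, Uv8_0, Wv8_0, Av8_0, Yv8_0, pv8_1, Uv8_1, Wv8_1, Av8_1, Yv8_1, pv8_2, Uv8_2, Wv8_2, Av8_2, Yv8_2, pv8_3, Uv8_3, Wv8_3, Av8_3, Yv8_3, pv8_4, Uv8_4, Wv8_4, Av8_4, Yv8_4, pv8_5, Uv8_5, Wv8_5, Av8_5, Yv8_5, pv8_6, Uv8_6, Wv8_6, Av8_6, Yv8_6, pv8_7, Uv8_7, Wv8_7, Av8_7, Yv8_7] <;> norm_num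
  · simp only [cEx, Pr, Fin.sum_univ_eight, Fintype.sum_bool, pv8_0, Uv8_0, Wv8_0, Av8_0, Yv8_0, pv8_1, Uv8_1, Wv8_1, Av8_1, Yv8_1, pv8_2, Uv8_2, Wv8_2, Av8_2, Yv8_2, pv8_3, Uv8_3, Wv8_3, Av8_3, Yv8_3, pv8_4, Uv8_4, Wv8_4, Av8_4, Yv8_4, pv8_5, Uv8_5, Wv8_5, Av8_5, Yv8_5, pv8_6, Uv8_6, Wv8_6, Av8_6, Yv8_6, pv8_7, Uv8_7, Wv8_7, Av8_7, Yv8_7]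
    norm_num
end

section
/- In the linear structural equation model U = ε_U, C = ε_C, Z = αz·U + γz·C + ε_Z, W = αw·U + γw·C + ε_W, A = μ·U + ν·C + ε_A, Y = β·A + αy·U + γy·C + ε_Y, where all noise terms are mean-zero, pairwise uncorrelated, with finite nonzero variances, and αz ≠ 0, αw ≠ 0: the two-stage procedure—(1) compute the linear projection Ŵ = E*[W | A, Z, C], the best linear predictor of W from (A, Z, C); (2) compute the best linear predictor of Y from (A, Ŵ, C)—yields a coefficient on A equal to β, the true average causal effect. -/
open Finset

section helpers
variable {Ω : Type*} [Fintype Ω]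

lemma Ex_add (p X Y : Ω → ℝ) : Ex p (fun ω => X ω + Y ω) = Ex p X + Ex p Y := by
  simp [Ex, mul_add, Finset.sum_add_distrib]

lemma Ex_smul (p : Ω → ℝ) (c : ℝ) (X : Ω → ℝ) :
    Ex p (fun ω => c * X ω) = c * Ex p X := by
  simp only [Ex, Finset.mul_sum]
  exact Finset.sum_congr rfl fun ω _ => by ring

lemma Ex_sum {ι : Type*} (s : Finset ι) (p : Ω → ℝ) (F : ι → Ω → ℝ) :
    Ex p (fun ω => ∑ i ∈ s, F i ω) = ∑ i ∈ s, Ex p (F i) := by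
  simp only [Ex, Finset.mul_sum]
  exact Finset.sum_comm

lemma Ex_const (p : Ω → ℝ) (hsum : ∑ ω, p ω = 1) (c : ℝ) :
    Ex p (fun _ => c) = c := by
  simp only [Ex]
  rw [← Finset.sum_mul, hsum, one_mul]

lemma Ex_affine (p : Ω → ℝ) (hsum : ∑ ω, p ω = 1)
    (e : Fin 6 → Ω → ℝ) (hmean : ∀ i, Ex p (e i) = 0)
    (a : ℝ) (f : Fin 6 → ℝ) :
    Ex p (fun ω => a + ∑ i, f i * e i ω) = a := by
  have h1 : Ex p (fun ω => a + ∑ i, f i * e i ω)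
      = Ex p (fun _ => a) + Ex p (fun ω => ∑ i, f i * e i ω) := Ex_add p _ _
  rw [h1, Ex_const p hsum, Ex_sum]
  have : ∀ i : Fin 6, Ex p (fun ω => f i * e i ω) = 0 := by
    intro i; rw [Ex_smul, hmean, mul_zero]
  simp [this]

lemma key (p : Ω → ℝ) (hsum : ∑ ω, p ω = 1)
    (e : Fin 6 → Ω → ℝ) (hmean : ∀ i, Ex p (e i) = 0)
    (huncorr : ∀ i j, i ≠ j → Ex p (fun ω => e i ω * e j ω) = 0)
    (a b : ℝ) (f g : Fin 6 → ℝ) :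
    Ex p (fun ω => (a + ∑ i, f i * e i ω) * (b + ∑ i, g i * e i ω))
      = a * b + ∑ i, f i * g i * Ex p (fun ω => e i ω * e i ω) := by
  have expand : (fun ω => (a + ∑ i, f i * e i ω) * (b + ∑ i, g i * e i ω))
      = fun ω => (a * b + ∑ i, (a * g i) * e i ω)
          + ((∑ i, (b * f i) * e i ω) + ∑ i, ∑ j, (f i * g j) * (e i ω * e j ω)) := by
    funext ω
    have hS : (∑ i, f i * e i ω) * (∑ j, g j * e j ω)
        = ∑ i, ∑ j, (f i * g j) * (e i ω * e j ω) := by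
      rw [Finset.sum_mul_sum]
      exact Finset.sum_congr rfl fun i _ => Finset.sum_congr rfl fun j _ => by ring
    have hT : a * (∑ j, g j * e j ω) = ∑ j, (a * g j) * e j ω := by
      rw [Finset.mul_sum]; exact Finset.sum_congr rfl fun j _ => by ring
    have hU2 : b * (∑ i, f i * e i ω) = ∑ i, (b * f i) * e i ω := by
      rw [Finset.mul_sum]; exact Finset.sum_congr rfl fun i _ => by ring
    calc (a + ∑ i, f i * e i ω) * (b + ∑ i, g i * e i ω)
        = a * b + a * (∑ j, g j * e j ω)
          + (b * (∑ i, f i * e i ω) + (∑ i, f i * e i ω) * (∑ j, g j * e j ω)) := by ring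
      _ = _ := by rw [hS, hT, hU2]
  rw [expand]
  have hz : ∀ (c : Fin 6 → ℝ), Ex p (fun ω => ∑ i, c i * e i ω) = 0 := by
    intro c
    rw [Ex_sum]
    have : ∀ i : Fin 6, Ex p (fun ω => c i * e i ω) = 0 := by
      intro i; rw [Ex_smul, hmean, mul_zero]
    simp [this]
  have h2 : Ex p (fun ω => ∑ i, ∑ j, (f i * g j) * (e i ω * e j ω))
      = ∑ i, f i * g i * Ex p (fun ω => e i ω * e i ω) := by
    rw [Ex_sum]
    refine Finset.sum_congr rfl fun i _ => ?_
    rw [Ex_sum]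
    rw [Finset.sum_eq_single i]
    · rw [Ex_smul]
    · intro j _ hji
      rw [Ex_smul, huncorr i j (Ne.symm hji), mul_zero]
    · simp
  rw [Ex_add, Ex_add, Ex_add, Ex_const p hsum, hz, hz, h2]; ring

end helpers

lemma vec6_five (a b c d x y : ℝ) : (![a,b,c,d,x,y] : Fin 6 → ℝ) 5 = y := rfl

lemma vec6_four (a b c d x y : ℝ) : (![a,b,c,d,x,y] : Fin 6 → ℝ) 4 = x := rfl

/-- Validity of the two-stage linear proximal regression estimator: in the linear SEM
`U = ε_U`, `C = ε_C`, `Z = αz U + γz C + ε_Z`, `W = αw U + γw C + ε_W`,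
`A = μ U + ν C + ε_A`, `Y = β A + αy U + γy C + ε_Y`, with mean-zero, pairwise-uncorrelated
noises of nonzero variance and `αz ≠ 0`, `αw ≠ 0`, the coefficient on `A` of the best linear
predictor of `Y` from `(A, Ŵ, C)` — where `Ŵ` is the best linear predictor of `W` from
`(A, Z, C)` — equals the structural coefficient `β`. Best linear predictors are characterized
by orthogonality of the residual to the constant and to each regressor. -/
theorem stmt11 {Ω : Type*} [Fintype Ω] (p : Ω → ℝ)
    (hp : ∀ ω, 0 ≤ p ω) (hsum : ∑ ω, p ω = 1)
    (e : Fin 6 → Ω → ℝ)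
    (hmean : ∀ i, Ex p (e i) = 0)
    (huncorr : ∀ i j, i ≠ j → Ex p (fun ω => e i ω * e j ω) = 0)
    (hvar : ∀ i, Ex p (fun ω => e i ω * e i ω) ≠ 0)
    (αz γz αw γw μ ν β αy γy : ℝ) (hαz : αz ≠ 0) (hαw : αw ≠ 0)
    (U C Z W A Y : Ω → ℝ)
    (hU : ∀ ω, U ω = e 0 ω) (hC : ∀ ω, C ω = e 1 ω)
    (hZ : ∀ ω, Z ω = αz * U ω + γz * C ω + e 2 ω)
    (hW : ∀ ω, W ω = αw * U ω + γw * C ω + e 3 ω)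
    (hA : ∀ ω, A ω = μ * U ω + ν * C ω + e 4 ω)
    (hY : ∀ ω, Y ω = β * A ω + αy * U ω + γy * C ω + e 5 ω)
    -- first stage: Ŵ is the linear projection of W on (1, A, Z, C)
    (b₀ b₁ b₂ b₃ : ℝ) (What : Ω → ℝ)
    (hWhat : ∀ ω, What ω = b₀ + b₁ * A ω + b₂ * Z ω + b₃ * C ω)
    (h1c : Ex p (fun ω => W ω - What ω) = 0)
    (h1A : Ex p (fun ω => (W ω - What ω) * A ω) = 0)
    (h1Z : Ex p (fun ω => (W ω - What ω) * Z ω) = 0)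
    (h1C : Ex p (fun ω => (W ω - What ω) * C ω) = 0)
    -- second stage: Ŷ is the linear projection of Y on (1, A, Ŵ, C)
    (c₀ c₁ c₂ c₃ : ℝ) (Yhat : Ω → ℝ)
    (hYhat : ∀ ω, Yhat ω = c₀ + c₁ * A ω + c₂ * What ω + c₃ * C ω)
    (h2c : Ex p (fun ω => Y ω - Yhat ω) = 0)
    (h2A : Ex p (fun ω => (Y ω - Yhat ω) * A ω) = 0)
    (h2W : Ex p (fun ω => (Y ω - Yhat ω) * What ω) = 0)
    (h2C : Ex p (fun ω => (Y ω - Yhat ω) * C ω) = 0) :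
    c₁ = β := by
  have repWr : ∀ ω, W ω - What ω = (-b₀) + ∑ i, (![(αw - (b₁*μ + b₂*αz)), (γw - (b₁*ν + b₂*γz + b₃)), (-b₂), (1:ℝ), (-b₁), (0:ℝ)] : Fin 6 → ℝ) i * e i ω := by
    intro ω
    rw [hW ω, hWhat ω, hA ω, hZ ω, hU ω, hC ω]
    simp only [Fin.sum_univ_six, Matrix.cons_val_zero, Matrix.cons_val_one, Matrix.head_cons,
      Matrix.cons_val_two, Matrix.tail_cons, Matrix.cons_val_three, Matrix.cons_val_four,
      vec6_five, vec6_four]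
    ring
  have repAv : ∀ ω, A ω = (0:ℝ) + ∑ i, (![μ, ν, (0:ℝ), (0:ℝ), (1:ℝ), (0:ℝ)] : Fin 6 → ℝ) i * e i ω := by
    intro ω
    rw [hA ω, hU ω, hC ω]
    simp only [Fin.sum_univ_six, Matrix.cons_val_zero, Matrix.cons_val_one, Matrix.head_cons,
      Matrix.cons_val_two, Matrix.tail_cons, Matrix.cons_val_three, Matrix.cons_val_four,
      vec6_five, vec6_four]
    ring
  have repZv : ∀ ω, Z ω = (0:ℝ) + ∑ i, (![αz, γz, (1:ℝ), (0:ℝ), (0:ℝ), (0:ℝ)] : Fin 6 → ℝ) i * e i ω := by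
    intro ω
    rw [hZ ω, hU ω, hC ω]
    simp only [Fin.sum_univ_six, Matrix.cons_val_zero, Matrix.cons_val_one, Matrix.head_cons,
      Matrix.cons_val_two, Matrix.tail_cons, Matrix.cons_val_three, Matrix.cons_val_four,
      vec6_five, vec6_four]
    ring
  have repCv : ∀ ω, C ω = (0:ℝ) + ∑ i, (![(0:ℝ), (1:ℝ), (0:ℝ), (0:ℝ), (0:ℝ), (0:ℝ)] : Fin 6 → ℝ) i * e i ω := by
    intro ω
    rw [hC ω]
    simp only [Fin.sum_univ_six, Matrix.cons_val_zero, Matrix.cons_val_one, Matrix.head_cons,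
      Matrix.cons_val_two, Matrix.tail_cons, Matrix.cons_val_three, Matrix.cons_val_four,
      vec6_five, vec6_four]
    ring
  have repYr : ∀ ω, Y ω - Yhat ω = (-(c₀ + c₂*b₀)) + ∑ i, (![((β - c₁)*μ + αy - c₂*(b₁*μ + b₂*αz)), ((β - c₁)*ν + γy - c₂*(b₁*ν + b₂*γz + b₃) - c₃), (-(c₂*b₂)), (0:ℝ), ((β - c₁) - c₂*b₁), (1:ℝ)] : Fin 6 → ℝ) i * e i ω := by
    intro ω
    rw [hY ω, hYhat ω, hWhat ω, hA ω, hZ ω, hU ω, hC ω]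
    simp only [Fin.sum_univ_six, Matrix.cons_val_zero, Matrix.cons_val_one, Matrix.head_cons,
      Matrix.cons_val_two, Matrix.tail_cons, Matrix.cons_val_three, Matrix.cons_val_four,
      vec6_five, vec6_four]
    ring
  have repWh : ∀ ω, What ω = b₀ + ∑ i, (![(b₁*μ + b₂*αz), (b₁*ν + b₂*γz + b₃), b₂, (0:ℝ), b₁, (0:ℝ)] : Fin 6 → ℝ) i * e i ω := by
    intro ω
    rw [hWhat ω, hA ω, hZ ω, hU ω, hC ω]
    simp only [Fin.sum_univ_six, Matrix.cons_val_zero, Matrix.cons_val_one, Matrix.head_cons,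
      Matrix.cons_val_two, Matrix.tail_cons, Matrix.cons_val_three, Matrix.cons_val_four,
      vec6_five, vec6_four]
    ring
  have EA : (-b₀) * (0:ℝ) + ∑ i, (![(αw - (b₁*μ + b₂*αz)), (γw - (b₁*ν + b₂*γz + b₃)), (-b₂), (1:ℝ), (-b₁), (0:ℝ)] : Fin 6 → ℝ) i * (![μ, ν, (0:ℝ), (0:ℝ), (1:ℝ), (0:ℝ)] : Fin 6 → ℝ) i * Ex p (fun ω => e i ω * e i ω) = 0 := by
    have h := key p hsum e hmean huncorr (-b₀) (0:ℝ) ![(αw - (b₁*μ + b₂*αz)), (γw - (b₁*ν + b₂*γz + b₃)), (-b₂), (1:ℝ), (-b₁), (0:ℝ)] ![μ, ν, (0:ℝ), (0:ℝ), (1:ℝ), (0:ℝ)]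
    rw [show (fun ω => ((-b₀) + ∑ i, (![(αw - (b₁*μ + b₂*αz)), (γw - (b₁*ν + b₂*γz + b₃)), (-b₂), (1:ℝ), (-b₁), (0:ℝ)] : Fin 6 → ℝ) i * e i ω) * ((0:ℝ) + ∑ i, (![μ, ν, (0:ℝ), (0:ℝ), (1:ℝ), (0:ℝ)] : Fin 6 → ℝ) i * e i ω)) = (fun ω => (W ω - What ω) * A ω) from funext fun ω => by rw [repWr ω, repAv ω], h1A] at h
    exact h.symm
  simp only [Fin.sum_univ_six, Matrix.cons_val_zero, Matrix.cons_val_one, Matrix.head_cons,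
    Matrix.cons_val_two, Matrix.tail_cons, Matrix.cons_val_three, Matrix.cons_val_four,
    Matrix.cons_val_fin_one, Matrix.head_fin_const, vec6_five, vec6_four] at EA
  have EZ : (-b₀) * (0:ℝ) + ∑ i, (![(αw - (b₁*μ + b₂*αz)), (γw - (b₁*ν + b₂*γz + b₃)), (-b₂), (1:ℝ), (-b₁), (0:ℝ)] : Fin 6 → ℝ) i * (![αz, γz, (1:ℝ), (0:ℝ), (0:ℝ), (0:ℝ)] : Fin 6 → ℝ) i * Ex p (fun ω => e i ω * e i ω) = 0 := by
    have h := key p hsum e hmean huncorr (-b₀) (0:ℝ) ![(αw - (b₁*μ + b₂*αz)), (γw - (b₁*ν + b₂*γz + b₃)), (-b₂), (1:ℝ), (-b₁), (0:ℝ)] ![αz, γz, (1:ℝ), (0:ℝ), (0:ℝ), (0:ℝ)]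
    rw [show (fun ω => ((-b₀) + ∑ i, (![(αw - (b₁*μ + b₂*αz)), (γw - (b₁*ν + b₂*γz + b₃)), (-b₂), (1:ℝ), (-b₁), (0:ℝ)] : Fin 6 → ℝ) i * e i ω) * ((0:ℝ) + ∑ i, (![αz, γz, (1:ℝ), (0:ℝ), (0:ℝ), (0:ℝ)] : Fin 6 → ℝ) i * e i ω)) = (fun ω => (W ω - What ω) * Z ω) from funext fun ω => by rw [repWr ω, repZv ω], h1Z] at h
    exact h.symm
  simp only [Fin.sum_univ_six, Matrix.cons_val_zero, Matrix.cons_val_one, Matrix.head_cons,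
    Matrix.cons_val_two, Matrix.tail_cons, Matrix.cons_val_three, Matrix.cons_val_four,
    Matrix.cons_val_fin_one, Matrix.head_fin_const, vec6_five, vec6_four] at EZ
  have EC : (-b₀) * (0:ℝ) + ∑ i, (![(αw - (b₁*μ + b₂*αz)), (γw - (b₁*ν + b₂*γz + b₃)), (-b₂), (1:ℝ), (-b₁), (0:ℝ)] : Fin 6 → ℝ) i * (![(0:ℝ), (1:ℝ), (0:ℝ), (0:ℝ), (0:ℝ), (0:ℝ)] : Fin 6 → ℝ) i * Ex p (fun ω => e i ω * e i ω) = 0 := by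
    have h := key p hsum e hmean huncorr (-b₀) (0:ℝ) ![(αw - (b₁*μ + b₂*αz)), (γw - (b₁*ν + b₂*γz + b₃)), (-b₂), (1:ℝ), (-b₁), (0:ℝ)] ![(0:ℝ), (1:ℝ), (0:ℝ), (0:ℝ), (0:ℝ), (0:ℝ)]
    rw [show (fun ω => ((-b₀) + ∑ i, (![(αw - (b₁*μ + b₂*αz)), (γw - (b₁*ν + b₂*γz + b₃)), (-b₂), (1:ℝ), (-b₁), (0:ℝ)] : Fin 6 → ℝ) i * e i ω) * ((0:ℝ) + ∑ i, (![(0:ℝ), (1:ℝ), (0:ℝ), (0:ℝ), (0:ℝ), (0:ℝ)] : Fin 6 → ℝ) i * e i ω)) = (fun ω => (W ω - What ω) * C ω) from funext fun ω => by rw [repWr ω, repCv ω], h1C] at h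
    exact h.symm
  simp only [Fin.sum_univ_six, Matrix.cons_val_zero, Matrix.cons_val_one, Matrix.head_cons,
    Matrix.cons_val_two, Matrix.tail_cons, Matrix.cons_val_three, Matrix.cons_val_four,
    Matrix.cons_val_fin_one, Matrix.head_fin_const, vec6_five, vec6_four] at EC
  have FA : (-(c₀ + c₂*b₀)) * (0:ℝ) + ∑ i, (![((β - c₁)*μ + αy - c₂*(b₁*μ + b₂*αz)), ((β - c₁)*ν + γy - c₂*(b₁*ν + b₂*γz + b₃) - c₃), (-(c₂*b₂)), (0:ℝ), ((β - c₁) - c₂*b₁), (1:ℝ)] : Fin 6 → ℝ) i * (![μ, ν, (0:ℝ), (0:ℝ), (1:ℝ), (0:ℝ)] : Fin 6 → ℝ) i * Ex p (fun ω => e i ω * e i ω) = 0 := by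
    have h := key p hsum e hmean huncorr (-(c₀ + c₂*b₀)) (0:ℝ) ![((β - c₁)*μ + αy - c₂*(b₁*μ + b₂*αz)), ((β - c₁)*ν + γy - c₂*(b₁*ν + b₂*γz + b₃) - c₃), (-(c₂*b₂)), (0:ℝ), ((β - c₁) - c₂*b₁), (1:ℝ)] ![μ, ν, (0:ℝ), (0:ℝ), (1:ℝ), (0:ℝ)]
    rw [show (fun ω => ((-(c₀ + c₂*b₀)) + ∑ i, (![((β - c₁)*μ + αy - c₂*(b₁*μ + b₂*αz)), ((β - c₁)*ν + γy - c₂*(b₁*ν + b₂*γz + b₃) - c₃), (-(c₂*b₂)), (0:ℝ), ((β - c₁) - c₂*b₁), (1:ℝ)] : Fin 6 → ℝ) i * e i ω) * ((0:ℝ) + ∑ i, (![μ, ν, (0:ℝ), (0:ℝ), (1:ℝ), (0:ℝ)] : Fin 6 → ℝ) i * e i ω)) = (fun ω => (Y ω - Yhat ω) * A ω) from funext fun ω => by rw [repYr ω, repAv ω], h2A] at h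
    exact h.symm
  simp only [Fin.sum_univ_six, Matrix.cons_val_zero, Matrix.cons_val_one, Matrix.head_cons,
    Matrix.cons_val_two, Matrix.tail_cons, Matrix.cons_val_three, Matrix.cons_val_four,
    Matrix.cons_val_fin_one, Matrix.head_fin_const, vec6_five, vec6_four] at FA
  have FW : (-(c₀ + c₂*b₀)) * b₀ + ∑ i, (![((β - c₁)*μ + αy - c₂*(b₁*μ + b₂*αz)), ((β - c₁)*ν + γy - c₂*(b₁*ν + b₂*γz + b₃) - c₃), (-(c₂*b₂)), (0:ℝ), ((β - c₁) - c₂*b₁), (1:ℝ)] : Fin 6 → ℝ) i * (![(b₁*μ + b₂*αz), (b₁*ν + b₂*γz + b₃), b₂, (0:ℝ), b₁, (0:ℝ)] : Fin 6 → ℝ) i * Ex p (fun ω => e i ω * e i ω) = 0 := by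
    have h := key p hsum e hmean huncorr (-(c₀ + c₂*b₀)) b₀ ![((β - c₁)*μ + αy - c₂*(b₁*μ + b₂*αz)), ((β - c₁)*ν + γy - c₂*(b₁*ν + b₂*γz + b₃) - c₃), (-(c₂*b₂)), (0:ℝ), ((β - c₁) - c₂*b₁), (1:ℝ)] ![(b₁*μ + b₂*αz), (b₁*ν + b₂*γz + b₃), b₂, (0:ℝ), b₁, (0:ℝ)]
    rw [show (fun ω => ((-(c₀ + c₂*b₀)) + ∑ i, (![((β - c₁)*μ + αy - c₂*(b₁*μ + b₂*αz)), ((β - c₁)*ν + γy - c₂*(b₁*ν + b₂*γz + b₃) - c₃), (-(c₂*b₂)), (0:ℝ), ((β - c₁) - c₂*b₁), (1:ℝ)] : Fin 6 → ℝ) i * e i ω) * (b₀ + ∑ i, (![(b₁*μ + b₂*αz), (b₁*ν + b₂*γz + b₃), b₂, (0:ℝ), b₁, (0:ℝ)] : Fin 6 → ℝ) i * e i ω)) = (fun ω => (Y ω - Yhat ω) * What ω) from funext fun ω => by rw [repYr ω, repWh ω], h2W] at h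
    exact h.symm
  simp only [Fin.sum_univ_six, Matrix.cons_val_zero, Matrix.cons_val_one, Matrix.head_cons,
    Matrix.cons_val_two, Matrix.tail_cons, Matrix.cons_val_three, Matrix.cons_val_four,
    Matrix.cons_val_fin_one, Matrix.head_fin_const, vec6_five, vec6_four] at FW
  have FC : (-(c₀ + c₂*b₀)) * (0:ℝ) + ∑ i, (![((β - c₁)*μ + αy - c₂*(b₁*μ + b₂*αz)), ((β - c₁)*ν + γy - c₂*(b₁*ν + b₂*γz + b₃) - c₃), (-(c₂*b₂)), (0:ℝ), ((β - c₁) - c₂*b₁), (1:ℝ)] : Fin 6 → ℝ) i * (![(0:ℝ), (1:ℝ), (0:ℝ), (0:ℝ), (0:ℝ), (0:ℝ)] : Fin 6 → ℝ) i * Ex p (fun ω => e i ω * e i ω) = 0 := by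
    have h := key p hsum e hmean huncorr (-(c₀ + c₂*b₀)) (0:ℝ) ![((β - c₁)*μ + αy - c₂*(b₁*μ + b₂*αz)), ((β - c₁)*ν + γy - c₂*(b₁*ν + b₂*γz + b₃) - c₃), (-(c₂*b₂)), (0:ℝ), ((β - c₁) - c₂*b₁), (1:ℝ)] ![(0:ℝ), (1:ℝ), (0:ℝ), (0:ℝ), (0:ℝ), (0:ℝ)]
    rw [show (fun ω => ((-(c₀ + c₂*b₀)) + ∑ i, (![((β - c₁)*μ + αy - c₂*(b₁*μ + b₂*αz)), ((β - c₁)*ν + γy - c₂*(b₁*ν + b₂*γz + b₃) - c₃), (-(c₂*b₂)), (0:ℝ), ((β - c₁) - c₂*b₁), (1:ℝ)] : Fin 6 → ℝ) i * e i ω) * ((0:ℝ) + ∑ i, (![(0:ℝ), (1:ℝ), (0:ℝ), (0:ℝ), (0:ℝ), (0:ℝ)] : Fin 6 → ℝ) i * e i ω)) = (fun ω => (Y ω - Yhat ω) * C ω) from funext fun ω => by rw [repYr ω, repCv ω], h2C] at h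
    exact h.symm
  simp only [Fin.sum_univ_six, Matrix.cons_val_zero, Matrix.cons_val_one, Matrix.head_cons,
    Matrix.cons_val_two, Matrix.tail_cons, Matrix.cons_val_three, Matrix.cons_val_four,
    Matrix.cons_val_fin_one, Matrix.head_fin_const, vec6_five, vec6_four] at FC
  have F0 : c₀ + c₂*b₀ = 0 := by
    have h := Ex_affine p hsum e hmean (-(c₀ + c₂*b₀)) ![((β - c₁)*μ + αy - c₂*(b₁*μ + b₂*αz)), ((β - c₁)*ν + γy - c₂*(b₁*ν + b₂*γz + b₃) - c₃), (-(c₂*b₂)), (0:ℝ), ((β - c₁) - c₂*b₁), (1:ℝ)]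
    rw [show (fun ω => (-(c₀ + c₂*b₀)) + ∑ i, (![((β - c₁)*μ + αy - c₂*(b₁*μ + b₂*αz)), ((β - c₁)*ν + γy - c₂*(b₁*ν + b₂*γz + b₃) - c₃), (-(c₂*b₂)), (0:ℝ), ((β - c₁) - c₂*b₁), (1:ℝ)] : Fin 6 → ℝ) i * e i ω) = (fun ω => Y ω - Yhat ω) from funext fun ω => (repYr ω).symm, h2c] at h
    linarith
  have hs1 : (γw - (b₁*ν + b₂*γz + b₃)) = 0 := by
    have h : (γw - (b₁*ν + b₂*γz + b₃)) * (Ex p (fun ω => e 1 ω * e 1 ω)) = 0 := by linear_combination EC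
    rcases mul_eq_zero.mp h with h' | h'
    · exact h'
    · exact absurd h' (hvar 1)
  have ht1 : ((β - c₁)*ν + γy - c₂*(b₁*ν + b₂*γz + b₃) - c₃) = 0 := by
    have h : ((β - c₁)*ν + γy - c₂*(b₁*ν + b₂*γz + b₃) - c₃) * (Ex p (fun ω => e 1 ω * e 1 ω)) = 0 := by linear_combination FC
    rcases mul_eq_zero.mp h with h' | h'
    · exact h'
    · exact absurd h' (hvar 1)
  have E2 : (αw - (b₁*μ + b₂*αz)) * μ * (Ex p (fun ω => e 0 ω * e 0 ω)) = b₁ * (Ex p (fun ω => e 4 ω * e 4 ω)) := by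
    linear_combination EA - ν * (Ex p (fun ω => e 1 ω * e 1 ω)) * hs1
  have E3 : (αw - (b₁*μ + b₂*αz)) * αz * (Ex p (fun ω => e 0 ω * e 0 ω)) = b₂ * (Ex p (fun ω => e 2 ω * e 2 ω)) := by
    linear_combination EZ - γz * (Ex p (fun ω => e 1 ω * e 1 ω)) * hs1
  have F2 : ((β - c₁)*μ + αy - c₂*(b₁*μ + b₂*αz)) * μ * (Ex p (fun ω => e 0 ω * e 0 ω)) + ((β - c₁) - c₂*b₁) * (Ex p (fun ω => e 4 ω * e 4 ω)) = 0 := by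
    linear_combination FA - ν * (Ex p (fun ω => e 1 ω * e 1 ω)) * ht1
  have F3 : ((β - c₁)*μ + αy - c₂*(b₁*μ + b₂*αz)) * (b₁*μ + b₂*αz) * (Ex p (fun ω => e 0 ω * e 0 ω)) - c₂*b₂*b₂ * (Ex p (fun ω => e 2 ω * e 2 ω)) + ((β - c₁) - c₂*b₁) * b₁ * (Ex p (fun ω => e 4 ω * e 4 ω)) = 0 := by
    linear_combination FW - (b₁*ν + b₂*γz + b₃) * (Ex p (fun ω => e 1 ω * e 1 ω)) * ht1 + b₀ * F0
  by_cases hb2 : b₂ = 0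
  · have hs0 : (αw - (b₁*μ + b₂*αz)) = 0 := by
      have h : (αw - (b₁*μ + b₂*αz)) * (αz * (Ex p (fun ω => e 0 ω * e 0 ω))) = 0 := by
        linear_combination E3 + (Ex p (fun ω => e 2 ω * e 2 ω)) * hb2
      rcases mul_eq_zero.mp h with h' | h'
      · exact h'
      · exact absurd h' (mul_ne_zero hαz (hvar 0))
    have hb1 : b₁ = 0 := by
      have h : b₁ * (Ex p (fun ω => e 4 ω * e 4 ω)) = 0 := by
        linear_combination -E2 + μ * (Ex p (fun ω => e 0 ω * e 0 ω)) * hs0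
      rcases mul_eq_zero.mp h with h' | h'
      · exact h'
      · exact absurd h' (hvar 4)
    exact absurd (by linear_combination hs0 + μ*hb1 + αz*hb2 : αw = 0) hαw
  · have ht0 : ((β - c₁)*μ + αy - c₂*(b₁*μ + b₂*αz)) - c₂ * (αw - (b₁*μ + b₂*αz)) = 0 := by
      have h : (((β - c₁)*μ + αy - c₂*(b₁*μ + b₂*αz)) - c₂ * (αw - (b₁*μ + b₂*αz))) * (b₂ * (αz * (Ex p (fun ω => e 0 ω * e 0 ω)))) = 0 := by
        linear_combination F3 - b₁ * F2 - c₂*b₂ * E3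
      rcases mul_eq_zero.mp h with h' | h'
      · exact h'
      · exact absurd h' (mul_ne_zero hb2 (mul_ne_zero hαz (hvar 0)))
    have hfin : (β - c₁) * (Ex p (fun ω => e 4 ω * e 4 ω)) = 0 := by
      linear_combination F2 - μ * (Ex p (fun ω => e 0 ω * e 0 ω)) * ht0 - c₂ * E2
    rcases mul_eq_zero.mp hfin with h' | h'
    · linarith
    · exact absurd h' (hvar 4)
end

section
/- Let U, C, Z, W be random variables such that Z = f(T1), W = g(T2) for measurable f, g, where T1 ⊥ T2 | (U, C). Then simultaneously: (P1) W ⊥ Z | (U, C); and if additionally A = a(U, C, ε_A) and Y = y(A, U, C, ε_Y) with ε_A, ε_Y jointly independent of (T1, T2) given (U, C), then (P2) W ⊥ A | (U, C) and (P3) Z ⊥ Y | (A, U, C). -/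
open MeasureTheory ProbabilityTheory

section Stmt17Aux

variable {Ω : Type*} {mΩ : MeasurableSpace Ω} {μ : Measure Ω}

lemma stmt17_comap_le {α β : Type*} {mα : MeasurableSpace α} {mβ : MeasurableSpace β}
    (h : Ω → α) (φ : α → β) (hφ : Measurable φ) :
    MeasurableSpace.comap (fun ω => φ (h ω)) mβ ≤ MeasurableSpace.comap h mα := by
  rw [show (fun ω => φ (h ω)) = φ ∘ h from rfl, ← MeasurableSpace.comap_comp]
  exact MeasurableSpace.comap_mono hφ.comap_le

lemma stmt17_comap_prod {α β : Type*} {mα : MeasurableSpace α} {mβ : MeasurableSpace β}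
    (h₁ : Ω → α) (h₂ : Ω → β) :
    MeasurableSpace.comap (fun ω => (h₁ ω, h₂ ω)) inferInstance
      = MeasurableSpace.comap h₁ mα ⊔ MeasurableSpace.comap h₂ mβ := by
  have : (inferInstance : MeasurableSpace (α × β)) = mα.comap Prod.fst ⊔ mβ.comap Prod.snd := rfl
  rw [this, MeasurableSpace.comap_sup, MeasurableSpace.comap_comp, MeasurableSpace.comap_comp]
  rfl

lemma stmt17_ind_int [IsFiniteMeasure μ] {s : Set Ω} (hs : MeasurableSet[mΩ] s) :
    Integrable (s.indicator fun _ => (1 : ℝ)) μ :=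
  (integrable_const 1).indicator hs

lemma stmt17_condexp_norm_le_one [IsFiniteMeasure μ] {m : MeasurableSpace Ω} (hm : m ≤ mΩ)
    {s : Set Ω} (hs : MeasurableSet[mΩ] s) :
    ∀ᵐ ω ∂μ, ‖(μ⟦s | m⟧) ω‖ ≤ 1 := by
  have h0 : 0 ≤ᵐ[μ] μ⟦s | m⟧ :=
    condExp_nonneg (Filter.Eventually.of_forall fun ω =>
      Set.indicator_nonneg (fun _ _ => zero_le_one) ω)
  have h1 : μ⟦s | m⟧ ≤ᵐ[μ] μ[(fun _ => (1 : ℝ)) | m] :=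
    condExp_mono (stmt17_ind_int hs) (integrable_const 1)
      (Filter.Eventually.of_forall fun ω => by
        by_cases h : ω ∈ s <;> simp [Set.indicator_apply, h])
  rw [condExp_const hm] at h1
  filter_upwards [h0, h1] with ω hω0 hω1
  rw [Real.norm_eq_abs, abs_le]
  exact ⟨le_trans (by norm_num) hω0, hω1⟩

end Stmt17Aux


section Stmt17Aux2

variable {Ω : Type*}

lemma stmt17_ind_int' {mΩ : MeasurableSpace Ω} {μ : Measure Ω} [IsFiniteMeasure μ]
    {s : Set Ω} (hs : MeasurableSet[mΩ] s) :
    Integrable (s.indicator fun _ => (1 : ℝ)) μ :=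
  (integrable_const 1).indicator hs

/-- Key lemma: if the `mX`- and `mS`-measurable sets are conditionally independent given `m`,
then conditioning an `mX`-set on `m ⊔ mS` is the same as conditioning on `m`. -/
lemma stmt17_condexp_sup {m mX mS : MeasurableSpace Ω} {mΩ : MeasurableSpace Ω}
    {μ : Measure Ω} [IsProbabilityMeasure μ] (hm : m ≤ mΩ) (hX : mX ≤ mΩ) (hS : mS ≤ mΩ)
    (H : ∀ s t, MeasurableSet[mX] s → MeasurableSet[mS] t →
      (μ⟦s ∩ t | m⟧) =ᵐ[μ] (μ⟦s | m⟧) * (μ⟦t | m⟧))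
    {s : Set Ω} (hs : MeasurableSet[mX] s) :
    (μ⟦s | m ⊔ mS⟧) =ᵐ[μ] μ⟦s | m⟧ := by
  have hmS : m ⊔ mS ≤ mΩ := sup_le hm hS
  have hsΩ : MeasurableSet[mΩ] s := hX s hs
  have hint : Integrable (s.indicator fun _ => (1 : ℝ)) μ := stmt17_ind_int' hsΩ
  set p : Set (Set Ω) :=
    {t | ∃ u v, MeasurableSet[m] u ∧ MeasurableSet[mS] v ∧ t = u ∩ v} with hp
  have hgen : (m ⊔ mS) = MeasurableSpace.generateFrom p := by
    refine le_antisymm (sup_le ?_ ?_) (MeasurableSpace.generateFrom_le ?_)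
    · exact fun u hu => MeasurableSpace.measurableSet_generateFrom
        ⟨u, Set.univ, hu, MeasurableSet.univ, (Set.inter_univ u).symm⟩
    · exact fun v hv => MeasurableSpace.measurableSet_generateFrom
        ⟨Set.univ, v, MeasurableSet.univ, hv, (Set.univ_inter v).symm⟩
    · rintro t ⟨u, v, hu, hv, rfl⟩
      exact ((le_sup_left : m ≤ m ⊔ mS) u hu).inter ((le_sup_right : mS ≤ m ⊔ mS) v hv)
  have hpi : IsPiSystem p := by
    rintro t1 ⟨u1, v1, hu1, hv1, rfl⟩ t2 ⟨u2, v2, hu2, hv2, rfl⟩ _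
    exact ⟨u1 ∩ u2, v1 ∩ v2, hu1.inter hu2, hv1.inter hv2, Set.inter_inter_inter_comm u1 v1 u2 v2⟩
  have key : ∀ t, MeasurableSet[m ⊔ mS] t →
      ∫ x in t, (μ⟦s | m⟧) x ∂μ = ∫ x in t, s.indicator (fun _ => (1 : ℝ)) x ∂μ := by
    refine @MeasurableSpace.induction_on_inter Ω (m ⊔ mS)
      (fun t _ => ∫ x in t, (μ⟦s | m⟧) x ∂μ = ∫ x in t, s.indicator (fun _ => (1 : ℝ)) x ∂μ)
      p hgen hpi ?_ ?_ ?_ ?_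
    · simp
    · rintro t ⟨u, v, hu, hv, rfl⟩
      have hvΩ : MeasurableSet[mΩ] v := hS v hv
      have hintv : Integrable (v.indicator fun _ => (1 : ℝ)) μ := stmt17_ind_int' hvΩ
      have hb : ∀ᵐ x ∂μ, ‖(μ⟦s | m⟧) x‖ ≤ 1 := stmt17_condexp_norm_le_one hm hsΩ
      have hintprod : Integrable ((μ⟦s | m⟧) * (v.indicator fun _ => (1 : ℝ))) μ :=
        hintv.bdd_mul (stronglyMeasurable_condExp.mono hm).aestronglyMeasurable hb
      have hpull : μ[(μ⟦s | m⟧) * (v.indicator fun _ => (1 : ℝ)) | m]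
          =ᵐ[μ] (μ⟦s | m⟧) * μ⟦v | m⟧ :=
        condExp_mul_of_stronglyMeasurable_left stronglyMeasurable_condExp hintprod hintv
      have hHsv : ((μ⟦s | m⟧) * μ⟦v | m⟧ : Ω → ℝ) =ᵐ[μ] μ⟦s ∩ v | m⟧ := (H s v hs hv).symm
      have hindmul : v.indicator (μ⟦s | m⟧) = (μ⟦s | m⟧) * (v.indicator fun _ => (1 : ℝ)) := by
        funext x; by_cases hx : x ∈ v <;> simp [Set.indicator_apply, hx]
      have hind2 : (s ∩ v).indicator (fun _ => (1 : ℝ)) = v.indicator (s.indicator fun _ => 1) := by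
        funext x
        by_cases hx : x ∈ v <;> by_cases hx' : x ∈ s <;>
          simp [Set.indicator_apply, hx, hx']
      calc ∫ x in u ∩ v, (μ⟦s | m⟧) x ∂μ
          = ∫ x in u, v.indicator (μ⟦s | m⟧) x ∂μ := (setIntegral_indicator hvΩ).symm
        _ = ∫ x in u, ((μ⟦s | m⟧) * (v.indicator fun _ => (1 : ℝ))) x ∂μ := by rw [hindmul]
        _ = ∫ x in u, (μ[(μ⟦s | m⟧) * (v.indicator fun _ => (1 : ℝ)) | m]) x ∂μ :=
            (setIntegral_condExp hm hintprod hu).symm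
        _ = ∫ x in u, ((μ⟦s | m⟧) * μ⟦v | m⟧) x ∂μ :=
            integral_congr_ae (ae_restrict_of_ae hpull)
        _ = ∫ x in u, (μ⟦s ∩ v | m⟧) x ∂μ := integral_congr_ae (ae_restrict_of_ae hHsv)
        _ = ∫ x in u, (s ∩ v).indicator (fun _ => (1 : ℝ)) x ∂μ :=
            setIntegral_condExp hm (stmt17_ind_int' (hsΩ.inter hvΩ)) hu
        _ = ∫ x in u, v.indicator (s.indicator fun _ => (1 : ℝ)) x ∂μ := by rw [hind2]
        _ = ∫ x in u ∩ v, s.indicator (fun _ => (1 : ℝ)) x ∂μ := setIntegral_indicator hvΩ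
    · intro t htm iht
      have htΩ : MeasurableSet[mΩ] t := hmS t htm
      have h1 := integral_add_compl htΩ (integrable_condExp (m := m)
        (f := s.indicator fun _ => (1 : ℝ)) (μ := μ))
      have h2 := integral_add_compl htΩ hint
      have h3 : ∫ x, (μ⟦s | m⟧) x ∂μ = ∫ x, s.indicator (fun _ => (1 : ℝ)) x ∂μ :=
        integral_condExp hm
      linarith
    · intro F hdisj hmeas ihs
      rw [integral_iUnion (fun i => hmS _ (hmeas i)) hdisj integrable_condExp.integrableOn,
        integral_iUnion (fun i => hmS _ (hmeas i)) hdisj hint.integrableOn]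
      exact tsum_congr ihs
  exact (ae_eq_condExp_of_forall_setIntegral_eq hmS hint
    (fun t _ _ => integrable_condExp.integrableOn)
    (fun t ht _ => key t ht)
    ((stronglyMeasurable_condExp.mono (le_sup_left : m ≤ m ⊔ mS)).aestronglyMeasurable)).symm

end Stmt17Aux2

section Stmt17WU

variable {Ω : Type*}

/-- Weak union / contraction property needed for the proximal conditions. -/
lemma stmt17_weak_union {m mX mS m₂ : MeasurableSpace Ω} {mΩ : MeasurableSpace Ω}
    [StandardBorelSpace Ω] {μ : Measure Ω} [IsProbabilityMeasure μ]
    (hm : m ≤ mΩ) (hX : mX ≤ mΩ) (hS : mS ≤ mΩ)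
    (hm₂ : m₂ ≤ mΩ) (hle1 : m ≤ m₂) (hle2 : m₂ ≤ m ⊔ mS)
    (H : CondIndep m mX mS hm μ) :
    CondIndep m₂ mX (m₂ ⊔ mS) hm₂ μ := by
  have hmS : m ⊔ mS ≤ mΩ := sup_le hm hS
  have h2S : m₂ ⊔ mS ≤ mΩ := sup_le hm₂ hS
  have h2S' : m₂ ⊔ mS ≤ m ⊔ mS := sup_le hle2 le_sup_right
  rw [condIndep_iff m mX mS hm hX hS μ] at H
  rw [condIndep_iff m₂ mX (m₂ ⊔ mS) hm₂ hX h2S μ]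
  intro t1 t2 ht1 ht2
  have ht1Ω : MeasurableSet[mΩ] t1 := hX t1 ht1
  have ht2sup : MeasurableSet[m ⊔ mS] t2 := h2S' t2 ht2
  have ht2Ω : MeasurableSet[mΩ] t2 := hmS t2 ht2sup
  have hkey : (μ⟦t1 | m ⊔ mS⟧) =ᵐ[μ] μ⟦t1 | m⟧ := stmt17_condexp_sup hm hX hS H ht1
  -- (b) conditioning t1 on m₂ is the same as conditioning on m
  have hb : (μ⟦t1 | m₂⟧) =ᵐ[μ] μ⟦t1 | m⟧ := by
    refine (condExp_condExp_of_le hle2 hmS).symm.trans ?_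
    refine (condExp_congr_ae hkey).trans ?_
    rw [condExp_of_stronglyMeasurable hm₂ (stronglyMeasurable_condExp.mono hle1)
      integrable_condExp]
  -- indicator product identities
  have hindmul : (t1 ∩ t2).indicator (fun _ => (1 : ℝ))
      = (t2.indicator fun _ => (1 : ℝ)) * (t1.indicator fun _ => (1 : ℝ)) := by
    funext x
    by_cases hx : x ∈ t1 <;> by_cases hx' : x ∈ t2 <;>
      simp [Set.indicator_apply, hx, hx']
  have hint1 : Integrable (t1.indicator fun _ => (1 : ℝ)) μ := stmt17_ind_int' ht1Ω
  have hint2 : Integrable (t2.indicator fun _ => (1 : ℝ)) μ := stmt17_ind_int' ht2Ω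
  have hintprod : Integrable ((t2.indicator fun _ => (1 : ℝ))
      * (t1.indicator fun _ => (1 : ℝ))) μ := by
    rw [← hindmul]; exact stmt17_ind_int' (ht1Ω.inter ht2Ω)
  -- (c) pull out the t2 indicator at level m ⊔ mS
  have hc1 : (μ⟦t1 ∩ t2 | m ⊔ mS⟧)
      =ᵐ[μ] (t2.indicator fun _ => (1 : ℝ)) * μ⟦t1 | m⟧ := by
    have hpull := condExp_mul_of_stronglyMeasurable_left
      (m := m ⊔ mS) (mΩ := mΩ) (μ := μ)
      ((stronglyMeasurable_const (β := ℝ)).indicator ht2sup) hintprod hint1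
    rw [show (μ⟦t1 ∩ t2 | m ⊔ mS⟧)
        = μ[(t2.indicator fun _ => (1 : ℝ)) * (t1.indicator fun _ => (1 : ℝ)) | m ⊔ mS] by
      rw [← hindmul]]
    exact hpull.trans (Filter.EventuallyEq.mul (Filter.EventuallyEq.refl _ _) hkey)
  -- tower down to m₂ and pull out μ⟦t1|m⟧
  have hbound : ∀ᵐ x ∂μ, ‖(μ⟦t1 | m⟧) x‖ ≤ 1 := stmt17_condexp_norm_le_one hm ht1Ω
  have hintprod2 : Integrable ((μ⟦t1 | m⟧) * (t2.indicator fun _ => (1 : ℝ))) μ :=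
    hint2.bdd_mul (stronglyMeasurable_condExp.mono hm).aestronglyMeasurable hbound
  have hc3 : μ[(μ⟦t1 | m⟧) * (t2.indicator fun _ => (1 : ℝ)) | m₂]
      =ᵐ[μ] (μ⟦t1 | m⟧) * μ⟦t2 | m₂⟧ :=
    condExp_mul_of_stronglyMeasurable_left (stronglyMeasurable_condExp.mono hle1) hintprod2 hint2
  calc (μ⟦t1 ∩ t2 | m₂⟧)
      =ᵐ[μ] μ[μ⟦t1 ∩ t2 | m ⊔ mS⟧ | m₂] := (condExp_condExp_of_le hle2 hmS).symm
    _ =ᵐ[μ] μ[(μ⟦t1 | m⟧) * (t2.indicator fun _ => (1 : ℝ)) | m₂] := by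
        refine condExp_congr_ae (hc1.trans ?_)
        exact Filter.Eventually.of_forall fun x => mul_comm _ _
    _ =ᵐ[μ] (μ⟦t1 | m⟧) * μ⟦t2 | m₂⟧ := hc3
    _ =ᵐ[μ] (μ⟦t1 | m₂⟧) * μ⟦t2 | m₂⟧ := Filter.EventuallyEq.mul hb.symm (Filter.EventuallyEq.refl _ _)

end Stmt17WU

/-- Proposition 4 of the paper: if `Z = f(T1)` and `W = g(T2)` for measurable `f, g` with
`T1 ⊥ T2 | (U, C)`, then (P1) `W ⊥ Z | (U, C)`; and if moreover `A = a(U, C, ε_A)` and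
`Y = y(A, U, C, ε_Y)` with `(ε_A, ε_Y)` jointly independent of `(T1, T2)` given `(U, C)`,
then (P2) `W ⊥ A | (U, C)` and (P3) `Z ⊥ Y | (A, U, C)`. -/
theorem stmt17 {Ω 𝓣₁ 𝓣₂ γ δ E₁ E₂ αZ αW αA αY : Type*}
    [MeasurableSpace Ω] [StandardBorelSpace Ω]
    [MeasurableSpace 𝓣₁] [MeasurableSpace 𝓣₂] [MeasurableSpace γ] [MeasurableSpace δ]
    [MeasurableSpace E₁] [MeasurableSpace E₂] [MeasurableSpace αZ] [MeasurableSpace αW]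
    [MeasurableSpace αA] [MeasurableSpace αY]
    (μ : Measure Ω) [IsProbabilityMeasure μ]
    (T1 : Ω → 𝓣₁) (T2 : Ω → 𝓣₂) (U : Ω → γ) (C : Ω → δ) (εA : Ω → E₁) (εY : Ω → E₂)
    (hT1 : Measurable T1) (hT2 : Measurable T2)
    (hU : Measurable U) (hC : Measurable C)
    (hεA : Measurable εA) (hεY : Measurable εY)
    (f : 𝓣₁ → αZ) (g : 𝓣₂ → αW) (hf : Measurable f) (hg : Measurable g)
    (a : γ × δ × E₁ → αA) (y : αA × γ × δ × E₂ → αY)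
    (ha : Measurable a) (hy : Measurable y)
    (Z : Ω → αZ) (W : Ω → αW) (A : Ω → αA) (Y : Ω → αY)
    (hZ : Z = fun ω => f (T1 ω)) (hW : W = fun ω => g (T2 ω))
    (hA : A = fun ω => a (U ω, C ω, εA ω))
    (hY : Y = fun ω => y (A ω, U ω, C ω, εY ω))
    (hAm : Measurable A)
    (hTT : CondIndepFun (MeasurableSpace.comap (fun ω => (U ω, C ω)) inferInstance)
      (Measurable.comap_le (hU.prodMk hC)) T1 T2 μ)
    (hnoise : CondIndepFun (MeasurableSpace.comap (fun ω => (U ω, C ω)) inferInstance)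
      (Measurable.comap_le (hU.prodMk hC))
      (fun ω => (εA ω, εY ω)) (fun ω => (T1 ω, T2 ω)) μ) :
    CondIndepFun (MeasurableSpace.comap (fun ω => (U ω, C ω)) inferInstance)
      (Measurable.comap_le (hU.prodMk hC)) W Z μ ∧
    CondIndepFun (MeasurableSpace.comap (fun ω => (U ω, C ω)) inferInstance)
      (Measurable.comap_le (hU.prodMk hC)) W A μ ∧
    CondIndepFun (MeasurableSpace.comap (fun ω => (A ω, U ω, C ω)) inferInstance)
      (Measurable.comap_le (hAm.prodMk (hU.prodMk hC))) Z Y μ := by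

  subst hZ hW hA hY
  set m' : MeasurableSpace Ω := MeasurableSpace.comap (fun ω => (U ω, C ω)) inferInstance with hm'def
  have hm' : m' ≤ _ := Measurable.comap_le (hU.prodMk hC)
  set mTT : MeasurableSpace Ω :=
    MeasurableSpace.comap (fun ω => (T1 ω, T2 ω)) inferInstance with hmTTdef
  set mN : MeasurableSpace Ω :=
    MeasurableSpace.comap (fun ω => (εA ω, εY ω)) inferInstance with hmNdef
  have hTTle : mTT ≤ _ := (hT1.prodMk hT2).comap_le
  have hNle : mN ≤ _ := (hεA.prodMk hεY).comap_le
  -- the base conditional independence, in `CondIndep` form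
  have Hbase : CondIndep m' mTT mN hm' μ :=
    ((condIndepFun_iff_condIndep m' hm' (fun ω => (εA ω, εY ω)) (fun ω => (T1 ω, T2 ω)) μ).mp
      hnoise).symm
  -- the joint function ((U, C), (εA, εY))
  have hsupN : m' ⊔ mN
      = MeasurableSpace.comap (fun ω => ((U ω, C ω), (εA ω, εY ω))) inferInstance :=
    (stmt17_comap_prod _ _).symm
  refine ⟨?_, ?_, ?_⟩
  · -- P1
    exact Kernel.IndepFun.symm (hTT.comp hf hg)
  · -- P2
    have h2 : CondIndep m' mTT (m' ⊔ mN) hm' μ :=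
      stmt17_weak_union hm' hTTle hNle hm' le_rfl le_sup_left Hbase
    have hWle : MeasurableSpace.comap (fun ω => g (T2 ω)) inferInstance ≤ mTT :=
      stmt17_comap_le (fun ω => (T1 ω, T2 ω)) (fun p : 𝓣₁ × 𝓣₂ => g p.2)
        (hg.comp measurable_snd)
    have hAle : MeasurableSpace.comap (fun ω => a (U ω, C ω, εA ω)) inferInstance ≤ m' ⊔ mN := by
      rw [hsupN]
      exact stmt17_comap_le (fun ω => ((U ω, C ω), (εA ω, εY ω)))
        (fun p : (γ × δ) × (E₁ × E₂) => a (p.1.1, p.1.2, p.2.1)) (by fun_prop)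
    rw [condIndepFun_iff_condIndep]
    exact condIndep_of_condIndep_of_le_right
      (condIndep_of_condIndep_of_le_left h2 hWle) hAle
  · -- P3
    set m'' : MeasurableSpace Ω :=
      MeasurableSpace.comap (fun ω => (a (U ω, C ω, εA ω), U ω, C ω)) inferInstance with hm''def
    have hm'' : m'' ≤ _ := Measurable.comap_le (hAm.prodMk (hU.prodMk hC))
    have hle1 : m' ≤ m'' :=
      stmt17_comap_le (fun ω => (a (U ω, C ω, εA ω), U ω, C ω))
        (Prod.snd : αA × γ × δ → γ × δ) measurable_snd
    have hle2 : m'' ≤ m' ⊔ mN := by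
      rw [hsupN]
      exact stmt17_comap_le (fun ω => ((U ω, C ω), (εA ω, εY ω)))
        (fun p : (γ × δ) × (E₁ × E₂) => (a (p.1.1, p.1.2, p.2.1), p.1.1, p.1.2)) (by fun_prop)
    have h3 : CondIndep m'' mTT (m'' ⊔ mN) hm'' μ :=
      stmt17_weak_union hm' hTTle hNle hm'' hle1 hle2 Hbase
    have hZle : MeasurableSpace.comap (fun ω => f (T1 ω)) inferInstance ≤ mTT :=
      stmt17_comap_le (fun ω => (T1 ω, T2 ω)) (fun p : 𝓣₁ × 𝓣₂ => f p.1)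
        (hf.comp measurable_fst)
    have hsupN'' : m'' ⊔ mN = MeasurableSpace.comap
        (fun ω => ((a (U ω, C ω, εA ω), U ω, C ω), (εA ω, εY ω))) inferInstance :=
      (stmt17_comap_prod _ _).symm
    have hYle : MeasurableSpace.comap
        (fun ω => y (a (U ω, C ω, εA ω), U ω, C ω, εY ω)) inferInstance ≤ m'' ⊔ mN := by
      rw [hsupN'']
      exact stmt17_comap_le (fun ω => ((a (U ω, C ω, εA ω), U ω, C ω), (εA ω, εY ω)))
        (fun p : (αA × γ × δ) × (E₁ × E₂) => y (p.1.1, p.1.2.1, p.1.2.2, p.2.2)) (by fun_prop)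
    rw [condIndepFun_iff_condIndep]
    exact condIndep_of_condIndep_of_le_right
      (condIndep_of_condIndep_of_le_left h3 hZle) hYle
end
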